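/- arXiv:1304.6133 — 6 statements merged into one kernel-verified Lean document; each statement's English description precedes it below -/
import Mathlib

section
/- Let X - Y - X' be a Markov chain such that (X,Y) and (X',Y) have the same joint distribution. Then ρ_m(X;Y)² = max over functions f with E[f(X)] = 0, E[f(X)²] = 1 of E[f(X)f(X')]. -/
open scoped BigOperators

noncomputable section

/-- `p` is a probability mass function on a finite type. -/
def IsPMF {X : Type*} [Fintype X] (p : X → ℝ) : Prop :=
  (∀ x, 0 ≤ p x) ∧ ∑ x, p x = 1

/-- `p` is a joint probability mass function. -/
def IsJointPMF {X Y : Type*} [Fintype X] [Fintype Y] (p : X → Y → ℝ) : Prop :=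
  (∀ x y, 0 ≤ p x y) ∧ ∑ x, ∑ y, p x y = 1

/-- Hirschfeld–Gebelein–Rényi maximal correlation of a joint pmf `p`. -/
def maxCorr {X Y : Type*} [Fintype X] [Fintype Y] (p : X → Y → ℝ) : ℝ :=
  sSup {c : ℝ | ∃ f : X → ℝ, ∃ g : Y → ℝ,
    (∑ x, ∑ y, p x y * f x) = 0 ∧ (∑ x, ∑ y, p x y * g y) = 0 ∧
    (∑ x, ∑ y, p x y * (f x)^2) = 1 ∧ (∑ x, ∑ y, p x y * (g y)^2) = 1 ∧
    c = ∑ x, ∑ y, p x y * f x * g y}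

/-- Relative entropy (KL divergence) between pmfs on a finite type. -/
def KL {X : Type*} [Fintype X] (r p : X → ℝ) : ℝ :=
  ∑ x, r x * Real.log (r x / p x)

/-- `s*(X;Y)` for input distribution `p` and channel `W`. -/
def sStar {X Y : Type*} [Fintype X] [Fintype Y] (p : X → ℝ) (W : X → Y → ℝ) : ℝ :=
  sSup {c : ℝ | ∃ r : X → ℝ, IsPMF r ∧ r ≠ p ∧
    c = KL (fun y => ∑ x, r x * W x y) (fun y => ∑ x, p x * W x y) / KL r p}

/-- Shannon entropy of a pmf on a finite type. -/
def entropy {X : Type*} [Fintype X] (p : X → ℝ) : ℝ :=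
  ∑ x, Real.negMulLog (p x)

/-- Mutual information of a joint pmf. -/
def mutInfo {X Y : Type*} [Fintype X] [Fintype Y] (p : X → Y → ℝ) : ℝ :=
  entropy (fun x => ∑ y, p x y) + entropy (fun y => ∑ x, p x y)
    - entropy (fun z : X × Y => p z.1 z.2)

end

lemma aux_cs_div {ι : Type*} [Fintype ι] (q s g : ι → ℝ) (hq : ∀ i, 0 ≤ q i)
    (hs : ∀ i, q i = 0 → s i = 0) :
    (∑ i, s i * g i)^2 ≤ (∑ i, (s i)^2 / q i) * (∑ i, q i * (g i)^2) := by
  have h := Finset.sum_mul_sq_le_sq_mul_sq Finset.univ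
    (fun i => s i / Real.sqrt (q i)) (fun i => Real.sqrt (q i) * g i)
  have h1 : ∀ i : ι, s i / Real.sqrt (q i) * (Real.sqrt (q i) * g i) = s i * g i := by
    intro i
    rcases eq_or_lt_of_le (hq i) with h0 | h0
    · simp [hs i h0.symm, ← h0]
    · have : Real.sqrt (q i) ≠ 0 := by positivity
      field_simp
  have h2 : ∀ i : ι, (s i / Real.sqrt (q i))^2 = (s i)^2 / q i := by
    intro i; rw [div_pow, Real.sq_sqrt (hq i)]
  have h3 : ∀ i : ι, (Real.sqrt (q i) * g i)^2 = q i * (g i)^2 := by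
    intro i; rw [mul_pow, Real.sq_sqrt (hq i)]
  simp only [h1, h2, h3] at h
  exact h

lemma aux_div_le {ι : Type*} [Fintype ι] (w f : ι → ℝ) (hw : ∀ i, 0 ≤ w i) :
    (∑ i, w i * f i)^2 / (∑ i, w i) ≤ ∑ i, w i * (f i)^2 := by
  rcases eq_or_lt_of_le (Finset.sum_nonneg (fun i _ => hw i) : (0:ℝ) ≤ ∑ i, w i) with h0 | h0
  · rw [← h0, div_zero]
    exact Finset.sum_nonneg fun i _ => mul_nonneg (hw i) (sq_nonneg _)
  · rw [div_le_iff₀ h0]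
    have h := Finset.sum_mul_sq_le_sq_mul_sq Finset.univ
      (fun i => Real.sqrt (w i)) (fun i => Real.sqrt (w i) * f i)
    have h1 : ∀ i : ι, Real.sqrt (w i) * (Real.sqrt (w i) * f i) = w i * f i := by
      intro i; rw [← mul_assoc, Real.mul_self_sqrt (hw i)]
    have h2 : ∀ i : ι, (Real.sqrt (w i))^2 = w i := fun i => Real.sq_sqrt (hw i)
    have h3 : ∀ i : ι, (Real.sqrt (w i) * f i)^2 = w i * (f i)^2 := by
      intro i; rw [mul_pow, Real.sq_sqrt (hw i)]
    simp only [h1, h2, h3] at h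
    linarith [h]

/-- distribution simulation characterization. If `X - Y - X'` is a Markov
chain (joint pmf `P` on `X × Y × X`) with `(X,Y)` and `(X',Y)` equal in distribution, then
`ρ_m(X;Y)² = max_{f : E f(X)=0, E f(X)²=1} E[f(X) f(X')]`. -/
theorem dist_simulation_characterization {X Y : Type*} [Fintype X] [Fintype Y]
    (P : X → Y → X → ℝ)
    (hP : ∀ x y x', 0 ≤ P x y x')
    (hsum : ∑ x, ∑ y, ∑ x', P x y x' = 1)
    (hmarkov : ∀ x y x', P x y x' * (∑ a, ∑ b, P a y b)
        = (∑ b, P x y b) * (∑ a, P a y x'))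
    (hsame : ∀ x y, (∑ b, P x y b) = ∑ a, P a y x) :
    (maxCorr (fun x y => ∑ b, P x y b))^2
      = sSup {c : ℝ | ∃ f : X → ℝ,
          (∑ x, ∑ y, ∑ b, P x y b * f x) = 0 ∧
          (∑ x, ∑ y, ∑ b, P x y b * (f x)^2) = 1 ∧
          c = ∑ x, ∑ y, ∑ x', P x y x' * f x * f x'} := by
  classical
  set p : X → Y → ℝ := fun x y => ∑ b, P x y b with hp_def
  have hp0 : ∀ x y, 0 ≤ p x y := fun x y => Finset.sum_nonneg fun b _ => hP x y b
  set q : Y → ℝ := fun y => ∑ x, p x y with hq_def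
  have hq0 : ∀ y, 0 ≤ q y := fun y => Finset.sum_nonneg fun x _ => hp0 x y
  set s : (X → ℝ) → Y → ℝ := fun f y => ∑ x, p x y * f x with hs_def
  set T : (X → ℝ) → ℝ := fun f => ∑ y, (s f y)^2 / q y with hT_def
  -- zero-weight facts
  have hpz : ∀ y, q y = 0 → ∀ x, p x y = 0 := by
    intro y hy x
    have := (Finset.sum_eq_zero_iff_of_nonneg (fun x _ => hp0 x y)).1 hy
    exact this x (Finset.mem_univ x)
  have hsz : ∀ (f : X → ℝ) y, q y = 0 → s f y = 0 := by
    intro f y hy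
    simp only [hs_def]
    exact Finset.sum_eq_zero fun x _ => by rw [hpz y hy x, zero_mul]
  have hPz : ∀ y, q y = 0 → ∀ x x', P x y x' = 0 := by
    intro y hy x x'
    have hpx : p x y = 0 := hpz y hy x
    have := (Finset.sum_eq_zero_iff_of_nonneg (fun b _ => hP x y b)).1 hpx
    exact this x' (Finset.mem_univ x')
  -- sum rearrangements
  have hswap1 : ∀ f : X → ℝ, (∑ x, ∑ y, p x y * f x) = ∑ y, s f y := by
    intro f; rw [Finset.sum_comm]
  have hswap2 : ∀ g : Y → ℝ, (∑ x, ∑ y, p x y * g y) = ∑ y, q y * g y := by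
    intro g; rw [Finset.sum_comm]
    exact Finset.sum_congr rfl fun y _ => by rw [hq_def, Finset.sum_mul]
  have hswap2sq : ∀ g : Y → ℝ, (∑ x, ∑ y, p x y * (g y)^2) = ∑ y, q y * (g y)^2 := by
    intro g; rw [Finset.sum_comm]
    exact Finset.sum_congr rfl fun y _ => by rw [hq_def, Finset.sum_mul]
  have hswap3 : ∀ (f : X → ℝ) (g : Y → ℝ),
      (∑ x, ∑ y, p x y * f x * g y) = ∑ y, s f y * g y := by
    intro f g; rw [Finset.sum_comm]
    exact Finset.sum_congr rfl fun y _ => by rw [hs_def, Finset.sum_mul]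
  have hB1 : ∀ f : X → ℝ, (∑ x, ∑ y, ∑ b, P x y b * f x) = ∑ y, s f y := by
    intro f
    rw [← hswap1 f]
    exact Finset.sum_congr rfl fun x _ => Finset.sum_congr rfl fun y _ =>
      (Finset.sum_mul ..).symm
  have hB2 : ∀ f : X → ℝ, (∑ x, ∑ y, ∑ b, P x y b * (f x)^2)
      = ∑ x, ∑ y, p x y * (f x)^2 := by
    intro f
    exact Finset.sum_congr rfl fun x _ => Finset.sum_congr rfl fun y _ =>
      (Finset.sum_mul ..).symm
  -- the Markov identity
  have hq_eq : ∀ y, (∑ a, ∑ b, P a y b) = q y := fun y => rfl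
  have hMark : ∀ f : X → ℝ, (∑ x, ∑ y, ∑ x', P x y x' * f x * f x') = T f := by
    intro f
    rw [Finset.sum_comm, hT_def]
    refine Finset.sum_congr rfl fun y _ => ?_
    rcases eq_or_lt_of_le (hq0 y) with h0 | h0
    · rw [hsz f y h0.symm, ← h0]
      simp only [zero_pow, ne_eq, OfNat.ofNat_ne_zero, not_false_eq_true, div_zero]
      refine Finset.sum_eq_zero fun x _ => Finset.sum_eq_zero fun x' _ => ?_
      rw [hPz y h0.symm x x', zero_mul, zero_mul]
    · have hqne : q y ≠ 0 := ne_of_gt h0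
      have hPeq : ∀ x x', P x y x' = p x y * p x' y / q y := by
        intro x x'
        have h := hmarkov x y x'
        rw [hq_eq y, ← hsame x' y] at h
        field_simp
        linarith [h]
      calc ∑ x, ∑ x', P x y x' * f x * f x'
          = ∑ x, ∑ x', (p x y * f x) * (p x' y * f x') / q y := by
            refine Finset.sum_congr rfl fun x _ => Finset.sum_congr rfl fun x' _ => ?_
            rw [hPeq x x']; ring
        _ = (∑ x, p x y * f x) * (∑ x', p x' y * f x') / q y := by
            rw [Finset.sum_mul_sum]
            rw [Finset.sum_div]
            exact Finset.sum_congr rfl fun x _ => by rw [Finset.sum_div]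
        _ = (s f y)^2 / q y := by rw [hs_def]; ring
  -- nonnegativity and boundedness of T
  have hT0 : ∀ f : X → ℝ, 0 ≤ T f := by
    intro f
    exact Finset.sum_nonneg fun y _ => div_nonneg (sq_nonneg _) (hq0 y)
  have hT1 : ∀ f : X → ℝ, (∑ x, ∑ y, p x y * (f x)^2) = 1 → T f ≤ 1 := by
    intro f hf
    have : T f ≤ ∑ y, ∑ x, p x y * (f x)^2 := by
      refine Finset.sum_le_sum fun y _ => ?_
      exact aux_div_le (fun x => p x y) f (fun x => hp0 x y)
    rw [Finset.sum_comm, hf] at this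
    exact this
  -- the two sets
  set A : Set ℝ := {c : ℝ | ∃ f : X → ℝ, ∃ g : Y → ℝ,
    (∑ x, ∑ y, p x y * f x) = 0 ∧ (∑ x, ∑ y, p x y * g y) = 0 ∧
    (∑ x, ∑ y, p x y * (f x)^2) = 1 ∧ (∑ x, ∑ y, p x y * (g y)^2) = 1 ∧
    c = ∑ x, ∑ y, p x y * f x * g y} with hA_def
  set B : Set ℝ := {c : ℝ | ∃ f : X → ℝ,
    (∑ x, ∑ y, ∑ b, P x y b * f x) = 0 ∧
    (∑ x, ∑ y, ∑ b, P x y b * (f x)^2) = 1 ∧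
    c = ∑ x, ∑ y, ∑ x', P x y x' * f x * f x'} with hB_def
  have hgoal : maxCorr p = sSup A := rfl
  rw [hgoal]
  show (sSup A)^2 = sSup B
  -- elementwise facts
  have hBpos : ∀ b ∈ B, 0 ≤ b := by
    rintro b ⟨f, -, -, rfl⟩
    rw [hMark f]; exact hT0 f
  have hBle1 : ∀ b ∈ B, b ≤ 1 := by
    rintro b ⟨f, -, hf2, rfl⟩
    rw [hMark f]; exact hT1 f (by rw [← hB2 f]; exact hf2)
  have hBbdd : BddAbove B := ⟨1, fun b hb => hBle1 b hb⟩
  have hAcs : ∀ c ∈ A, ∃ f : X → ℝ, (T f ∈ B) ∧ c^2 ≤ T f := by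
    rintro c ⟨f, g, hf1, hg1, hf2, hg2, rfl⟩
    refine ⟨f, ⟨f, by rw [hB1 f, ← hswap1 f, hf1], by rw [hB2 f]; exact hf2,
      (hMark f).symm⟩, ?_⟩
    rw [hswap3 f g]
    have hcs := aux_cs_div q (s f) g hq0 (fun y => hsz f y)
    rw [← hswap2sq g, hg2, mul_one] at hcs
    exact hcs
  have hAle1 : ∀ c ∈ A, c ≤ 1 := by
    intro c hc
    obtain ⟨f, hfB, hcle⟩ := hAcs c hc
    have h1 : T f ≤ 1 := hBle1 _ hfB
    nlinarith
  have hAbdd : BddAbove A := ⟨1, fun c hc => hAle1 c hc⟩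
  have hAneg : ∀ c ∈ A, -c ∈ A := by
    rintro c ⟨f, g, hf1, hg1, hf2, hg2, rfl⟩
    refine ⟨f, fun y => -(g y), hf1, ?_, hf2, ?_, ?_⟩
    · simpa using hg1
    · simpa using hg2
    · rw [← Finset.sum_neg_distrib]
      exact Finset.sum_congr rfl fun x _ => by
        rw [← Finset.sum_neg_distrib]
        exact Finset.sum_congr rfl fun y _ => by ring
  -- construction: from b ∈ B with 0 < b, get sqrt b ∈ A
  have hBA : ∀ b ∈ B, 0 < b → Real.sqrt b ∈ A := by
    rintro b ⟨f, hf1, hf2, rfl⟩ hbpos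
    set bb : ℝ := ∑ x, ∑ y, ∑ x', P x y x' * f x * f x' with hbb
    have hbT : bb = T f := hMark f
    have hsb : Real.sqrt bb ≠ 0 := by positivity
    have hsb0 : 0 < Real.sqrt bb := Real.sqrt_pos.mpr hbpos
    set g : Y → ℝ := fun y => s f y / (q y * Real.sqrt bb) with hg_def
    have hqg : ∀ y, q y * g y = s f y / Real.sqrt bb := by
      intro y
      rcases eq_or_lt_of_le (hq0 y) with h0 | h0
      · rw [hg_def]
        simp only
        rw [← h0, hsz f y h0.symm]
        simp
      · rw [hg_def]
        have : q y ≠ 0 := ne_of_gt h0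
        field_simp
    have hqg2 : ∀ y, q y * (g y)^2 = (s f y)^2 / q y / bb := by
      intro y
      rcases eq_or_lt_of_le (hq0 y) with h0 | h0
      · rw [hg_def]
        simp only
        rw [← h0, hsz f y h0.symm]
        simp
      · rw [hg_def]
        simp only
        rw [div_pow, mul_pow, Real.sq_sqrt (le_of_lt hbpos)]
        have h1 : q y ≠ 0 := ne_of_gt h0
        field_simp
    have hsg : ∀ y, s f y * g y = (s f y)^2 / q y / Real.sqrt bb := by
      intro y
      rcases eq_or_lt_of_le (hq0 y) with h0 | h0
      · rw [hg_def]
        simp only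
        rw [← h0, hsz f y h0.symm]
        simp
      · rw [hg_def]
        have h1 : q y ≠ 0 := ne_of_gt h0
        field_simp
    refine ⟨f, g, by rw [hswap1 f, ← hB1 f]; exact hf1, ?_, by rw [← hB2 f]; exact hf2, ?_, ?_⟩
    · rw [hswap2 g]
      have : ∑ y, q y * g y = (∑ y, s f y) / Real.sqrt bb := by
        rw [Finset.sum_div]
        exact Finset.sum_congr rfl fun y _ => hqg y
      rw [this, ← hB1 f, hf1, zero_div]
    · rw [hswap2sq g]
      have : ∑ y, q y * (g y)^2 = T f / bb := by
        rw [hT_def]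
        simp only
        rw [Finset.sum_div]
        exact Finset.sum_congr rfl fun y _ => hqg2 y
      rw [this, ← hbT, div_self (ne_of_gt hbpos)]
    · rw [hswap3 f g]
      have : ∑ y, s f y * g y = T f / Real.sqrt bb := by
        rw [hT_def]
        simp only
        rw [Finset.sum_div]
        exact Finset.sum_congr rfl fun y _ => hsg y
      rw [this, ← hbT, Real.div_sqrt]
  -- final assembly
  rcases Set.eq_empty_or_nonempty B with hBe | hBne
  · have hAe : A = ∅ := by
      by_contra hA
      obtain ⟨c, hc⟩ := Set.nonempty_iff_ne_empty.mpr hA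
      obtain ⟨f, hfB, -⟩ := hAcs c hc
      rw [hBe] at hfB
      exact hfB
    rw [hAe, hBe, Real.sSup_empty]
    norm_num
  · rcases Set.eq_empty_or_nonempty A with hAe | hAne
    · rw [hAe, Real.sSup_empty]
      have hBzero : ∀ b ∈ B, b ≤ 0 := by
        intro b hb
        by_contra hbpos
        push_neg at hbpos
        have := hBA b hb hbpos
        rw [hAe] at this
        exact this
      obtain ⟨b0, hb0⟩ := id hBne
      have hb00 : b0 = 0 := le_antisymm (hBzero b0 hb0) (hBpos b0 hb0)
      have h1 : sSup B ≤ 0 := csSup_le hBne hBzero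
      have h2 : (0:ℝ) ≤ sSup B := hb00 ▸ le_csSup hBbdd hb0
      rw [le_antisymm h1 h2]
      norm_num
    · have hA0 : 0 ≤ sSup A := by
        obtain ⟨c, hc⟩ := hAne
        have h1 := le_csSup hAbdd hc
        have h2 := le_csSup hAbdd (hAneg c hc)
        linarith
      have hB0 : 0 ≤ sSup B := by
        obtain ⟨b, hb⟩ := hBne
        exact le_trans (hBpos b hb) (le_csSup hBbdd hb)
      apply le_antisymm
      · -- (sSup A)^2 ≤ sSup B
        have hle : sSup A ≤ Real.sqrt (sSup B) := by
          apply csSup_le hAne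
          intro c hc
          obtain ⟨f, hfB, hcle⟩ := hAcs c hc
          have h1 : c^2 ≤ sSup B := le_trans hcle (le_csSup hBbdd hfB)
          calc c ≤ |c| := le_abs_self c
            _ = Real.sqrt (c^2) := (Real.sqrt_sq_eq_abs c).symm
            _ ≤ Real.sqrt (sSup B) := Real.sqrt_le_sqrt h1
        calc (sSup A)^2 ≤ (Real.sqrt (sSup B))^2 := by
              apply pow_le_pow_left₀ hA0 hle
          _ = sSup B := Real.sq_sqrt hB0
      · -- sSup B ≤ (sSup A)^2
        apply csSup_le hBne
        intro b hb
        rcases eq_or_lt_of_le (hBpos b hb) with h0 | h0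
        · rw [← h0]; positivity
        · have hmem := hBA b hb h0
          have h1 : Real.sqrt b ≤ sSup A := le_csSup hAbdd hmem
          have h2 : 0 ≤ Real.sqrt b := Real.sqrt_nonneg b
          calc b = (Real.sqrt b)^2 := (Real.sq_sqrt (le_of_lt h0)).symm
            _ ≤ (sSup A)^2 := pow_le_pow_left₀ h2 h1 2
end

section
/- For finite-valued random variables X and Y with full-support marginals, ρ_m(X;Y) equals the second largest singular value of the matrix Q with entries Q_{x,y} = p(x,y)/√(p(x)p(y)). -/
open scoped BigOperators

/-!
Put `u = √p_X` and `w = √p_Y`. Writing `f = φ / u` and `g = ψ / w`, the correlation `E[f(X) g(Y)]`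
becomes `φ ⬝ Q ψ`, the mean-zero constraints become `φ ⊥ u`, `ψ ⊥ w`, and the unit-variance
constraints become `‖φ‖ = ‖ψ‖ = 1`. Since `Q w = u` and `Qᵀ u = w`, the vector `u` is an eigenvector
of `Q Qᵀ` for the eigenvalue `1`, which is the largest one because `‖Qᵀ φ‖ ≤ ‖φ‖` by Cauchy–Schwarz
in `L²(p)`. For fixed `φ` the best `ψ` is `Qᵀ φ / ‖Qᵀ φ‖`, which is automatically orthogonal to `w`,
and the maximum of `‖Qᵀ φ‖² = φ ⬝ Q Qᵀ φ` over unit vectors `φ ⊥ u` is the second largest eigenvalue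
of `Q Qᵀ` (Courant–Fischer).
-/

open Matrix

section SecondLargest

variable {ι : Type*}

/-- Second largest value of `e`, counted with multiplicity (junk value `0` when `ι` has fewer
than two elements). -/
noncomputable def secondLargest (e : ι → ℝ) : ℝ :=
  sSup {c | ∃ i j, i ≠ j ∧ c = min (e i) (e j)}

theorem secondLargest_of_subsingleton [Subsingleton ι] (e : ι → ℝ) : secondLargest e = 0 := by
  rw [← Real.sSup_empty, secondLargest]
  congr
  refine Set.eq_empty_of_forall_notMem ?_
  rintro _ ⟨i, j, hij, -⟩
  exact hij (Subsingleton.elim i j)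

variable [Finite ι]

theorem finite_setOf_min_of_ne (e : ι → ℝ) :
    {c | ∃ i j, i ≠ j ∧ c = min (e i) (e j)}.Finite :=
  (Set.finite_range fun ij : ι × ι => min (e ij.1) (e ij.2)).subset
    fun _ ⟨i, j, _, hc⟩ => ⟨(i, j), hc.symm⟩

theorem min_le_secondLargest {e : ι → ℝ} {i j : ι} (hij : i ≠ j) :
    min (e i) (e j) ≤ secondLargest e :=
  le_csSup (finite_setOf_min_of_ne e).bddAbove ⟨i, j, hij, rfl⟩

theorem eq_of_secondLargest_lt {e : ι → ℝ} {i j : ι} (hi : secondLargest e < e i)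
    (hj : secondLargest e < e j) : i = j := by
  by_contra hij
  exact (min_le_secondLargest hij).not_gt (lt_min hi hj)

theorem exists_eq_secondLargest [Nontrivial ι] (e : ι → ℝ) :
    ∃ i j, i ≠ j ∧ e j ≤ e i ∧ e j = secondLargest e := by
  obtain ⟨i, j, hij⟩ := exists_pair_ne ι
  obtain ⟨i, j, hij, he⟩ : secondLargest e ∈ {c | ∃ i j, i ≠ j ∧ c = min (e i) (e j)} :=
    Set.Nonempty.csSup_mem ⟨_, i, j, hij, rfl⟩ (finite_setOf_min_of_ne e)
  rcases le_total (e i) (e j) with h | h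
  · exact ⟨j, i, hij.symm, h, by rw [he, min_eq_left h]⟩
  · exact ⟨i, j, hij, h, by rw [he, min_eq_right h]⟩

theorem Monotone.secondLargest_comp {g : ℝ → ℝ} (hg : Monotone g) (hg0 : g 0 = 0) (e : ι → ℝ) :
    secondLargest (g ∘ e) = g (secondLargest e) := by
  cases subsingleton_or_nontrivial ι
  · rw [secondLargest_of_subsingleton, secondLargest_of_subsingleton, hg0]
  obtain ⟨i, j, hij, hji, he⟩ := exists_eq_secondLargest e
  refine IsGreatest.csSup_eq ⟨⟨i, j, hij, ?_⟩, ?_⟩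
  · rw [Function.comp_apply, Function.comp_apply, ← hg.map_min, min_eq_right hji, he]
  · rintro _ ⟨k, l, hkl, rfl⟩
    rw [Function.comp_apply, Function.comp_apply, ← hg.map_min]
    exact hg (min_le_secondLargest hkl)

end SecondLargest

theorem sum_mul_sq_le_secondLargest_mul_sum_sq {ι : Type*} [Fintype ι] {e c d : ι → ℝ} {μ : ℝ}
    (he : ∀ i, e i ≤ μ) (hd : ∀ i, d i ≠ 0 → e i = μ) (hd0 : d ≠ 0)
    (hcd : ∑ i, c i * d i = 0) :
    ∑ i, e i * c i ^ 2 ≤ secondLargest e * ∑ i, c i ^ 2 := by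
  -- At most one index lies above the second largest value; `d` lives there and `c ⊥ d`.
  have hc : ∀ i, secondLargest e < e i → c i = 0 := by
    intro i hi
    have hdj : ∀ j, j ≠ i → d j = 0 := by
      intro j hji
      by_contra hj
      exact hji (eq_of_secondLargest_lt (hi.trans_le ((he i).trans_eq (hd j hj).symm)) hi)
    have hdi : d i ≠ 0 := fun h => hd0 (funext fun j => by
      rcases eq_or_ne j i with rfl | hji
      exacts [h, hdj j hji])
    rw [Fintype.sum_eq_single i fun j hji => by rw [hdj j hji, mul_zero]] at hcd
    exact (mul_eq_zero.mp hcd).resolve_right hdi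
  rw [Finset.mul_sum]
  refine Finset.sum_le_sum fun i _ => ?_
  rcases le_or_gt (e i) (secondLargest e) with h | h
  · exact mul_le_mul_of_nonneg_right h (sq_nonneg _)
  · rw [hc i h, sq, mul_zero, mul_zero, mul_zero]

theorem Matrix.dotProduct_le_sqrt_mul_sqrt {n : Type*} [Fintype n] (v w : n → ℝ) :
    v ⬝ᵥ w ≤ √(v ⬝ᵥ v) * √(w ⬝ᵥ w) := by
  simpa only [dotProduct, sq] using Real.sum_mul_le_sqrt_mul_sqrt Finset.univ v w

theorem Matrix.dotProduct_mul_conjTranspose_mulVec {m n : Type*} [Fintype m] [Fintype n]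
    (Q : Matrix m n ℝ) (φ : m → ℝ) :
    φ ⬝ᵥ (Q * Qᴴ) *ᵥ φ = φ ᵥ* Q ⬝ᵥ φ ᵥ* Q := by
  rw [← mulVec_mulVec, conjTranspose_eq_transpose_of_trivial, mulVec_transpose, dotProduct_mulVec]

namespace Matrix.IsHermitian

variable {n : Type*} [Fintype n] [DecidableEq n] {A : Matrix n n ℝ} (hA : A.IsHermitian)

theorem eigenvectorBasis_dotProduct_eigenvectorBasis (i j : n) :
    ⇑(hA.eigenvectorBasis i) ⬝ᵥ ⇑(hA.eigenvectorBasis j) = if i = j then 1 else 0 := by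
  rw [← orthonormal_iff_ite.mp hA.eigenvectorBasis.orthonormal i j,
    EuclideanSpace.inner_eq_star_dotProduct, star_trivial, dotProduct_comm]

theorem sum_eigenvectorBasis_dotProduct_mul (φ ψ : n → ℝ) :
    ∑ i, (⇑(hA.eigenvectorBasis i) ⬝ᵥ φ) * (⇑(hA.eigenvectorBasis i) ⬝ᵥ ψ) = φ ⬝ᵥ ψ := by
  have := hA.eigenvectorBasis.sum_inner_mul_inner (WithLp.toLp 2 φ) (WithLp.toLp 2 ψ)
  simpa only [EuclideanSpace.inner_eq_star_dotProduct, star_trivial, dotProduct_comm ψ] using this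

theorem eigenvectorBasis_dotProduct_mulVec (i : n) (φ : n → ℝ) :
    ⇑(hA.eigenvectorBasis i) ⬝ᵥ A *ᵥ φ = hA.eigenvalues i * (⇑(hA.eigenvectorBasis i) ⬝ᵥ φ) := by
  rw [dotProduct_mulVec, ← mulVec_transpose, ← conjTranspose_eq_transpose_of_trivial, hA.eq,
    mulVec_eigenvectorBasis, smul_dotProduct, smul_eq_mul]

theorem dotProduct_mulVec_eq_sum (φ : n → ℝ) :
    φ ⬝ᵥ A *ᵥ φ = ∑ i, hA.eigenvalues i * (⇑(hA.eigenvectorBasis i) ⬝ᵥ φ) ^ 2 := by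
  rw [← hA.sum_eigenvectorBasis_dotProduct_mul]
  exact Finset.sum_congr rfl fun i _ => by rw [eigenvectorBasis_dotProduct_mulVec]; ring

theorem dotProduct_mulVec_le_secondLargest_mul {u φ : n → ℝ} {μ : ℝ} (hu : A *ᵥ u = μ • u)
    (hu0 : u ≠ 0) (hμ : ∀ i, hA.eigenvalues i ≤ μ) (hφ : u ⬝ᵥ φ = 0) :
    φ ⬝ᵥ A *ᵥ φ ≤ secondLargest hA.eigenvalues * (φ ⬝ᵥ φ) := by
  rw [hA.dotProduct_mulVec_eq_sum, ← hA.sum_eigenvectorBasis_dotProduct_mul φ φ]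
  simp only [← sq]
  refine sum_mul_sq_le_secondLargest_mul_sum_sq hμ
    (d := fun i => ⇑(hA.eigenvectorBasis i) ⬝ᵥ u) ?_ ?_ ?_
  · intro i hi
    have h := hA.eigenvectorBasis_dotProduct_mulVec i u
    rw [hu, dotProduct_smul, smul_eq_mul] at h
    exact (mul_right_cancel₀ hi h).symm
  · intro h
    have hd : ∀ i, ⇑(hA.eigenvectorBasis i) ⬝ᵥ u = 0 := congrFun h
    apply hu0
    rw [← dotProduct_self_eq_zero, ← hA.sum_eigenvectorBasis_dotProduct_mul]
    simp [hd]
  · rw [hA.sum_eigenvectorBasis_dotProduct_mul, dotProduct_comm, hφ]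

theorem exists_orthogonal_eigenvector_secondLargest [Nontrivial n] {u : n → ℝ} {μ : ℝ}
    (hu : A *ᵥ u = μ • u) (hμ : ∀ i, hA.eigenvalues i ≤ μ) :
    ∃ φ, φ ⬝ᵥ φ = 1 ∧ u ⬝ᵥ φ = 0 ∧ A *ᵥ φ = secondLargest hA.eigenvalues • φ := by
  obtain ⟨i, j, hij, hji, hj⟩ := exists_eq_secondLargest hA.eigenvalues
  set b := fun k => ⇑(hA.eigenvectorBasis k) with hb
  have hbb : ∀ k l, b k ⬝ᵥ b l = if k = l then 1 else 0 :=
    hA.eigenvectorBasis_dotProduct_eigenvectorBasis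
  obtain ⟨φ, hφ0, hφu, hφA⟩ :
      ∃ φ, φ ≠ 0 ∧ u ⬝ᵥ φ = 0 ∧ A *ᵥ φ = secondLargest hA.eigenvalues • φ := by
    by_cases hdj : b j ⬝ᵥ u = 0
    · refine ⟨b j, fun h => ?_, by rwa [dotProduct_comm], by rw [mulVec_eigenvectorBasis, hj]⟩
      simpa [h] using hbb j j
    -- Otherwise `u` has a component along `b j`, so `e j = μ ≥ e i`, and the eigenvalue is double.
    have hej : hA.eigenvalues j = μ := by
      have h := hA.eigenvectorBasis_dotProduct_mulVec j u
      rw [hu, dotProduct_smul, smul_eq_mul] at h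
      exact (mul_right_cancel₀ hdj h).symm
    have hei : hA.eigenvalues i = secondLargest hA.eigenvalues :=
      hj ▸ le_antisymm (hej ▸ hμ i) hji
    refine ⟨(b j ⬝ᵥ u) • b i - (b i ⬝ᵥ u) • b j, fun h => hdj ?_, ?_, ?_⟩
    · simpa [hbb, hij] using congrArg (b i ⬝ᵥ ·) h
    · rw [dotProduct_comm, sub_dotProduct, smul_dotProduct, smul_dotProduct, smul_eq_mul,
        smul_eq_mul, sub_eq_zero, mul_comm]
    · rw [mulVec_sub, mulVec_smul, mulVec_smul, hb, mulVec_eigenvectorBasis,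
        mulVec_eigenvectorBasis, hei, ← hj, smul_sub, smul_comm _ (hA.eigenvalues j),
        smul_comm _ (hA.eigenvalues j)]
  have hpos : 0 < φ ⬝ᵥ φ := lt_of_le_of_ne (Finset.sum_nonneg fun i _ => mul_self_nonneg _)
    (Ne.symm (dotProduct_self_eq_zero.not.mpr hφ0))
  refine ⟨(√(φ ⬝ᵥ φ))⁻¹ • φ, ?_, ?_, ?_⟩
  · rw [smul_dotProduct, dotProduct_smul, smul_eq_mul, smul_eq_mul, ← mul_assoc, ← sq, inv_pow,
      Real.sq_sqrt hpos.le, inv_mul_cancel₀ hpos.ne']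
  · rw [dotProduct_smul, hφu, smul_zero]
  · rw [mulVec_smul, hφA, smul_comm]

end Matrix.IsHermitian

section SingularValue

variable {m n : Type*} [Fintype m] [Fintype n]

def orthogonalCorrelations (Q : Matrix m n ℝ) (u : m → ℝ) (w : n → ℝ) : Set ℝ :=
  {c | ∃ φ ψ, u ⬝ᵥ φ = 0 ∧ w ⬝ᵥ ψ = 0 ∧ φ ⬝ᵥ φ = 1 ∧ ψ ⬝ᵥ ψ = 1 ∧ c = φ ⬝ᵥ Q *ᵥ ψ}

theorem neg_mem_orthogonalCorrelations {Q : Matrix m n ℝ} {u : m → ℝ} {w : n → ℝ} {c : ℝ}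
    (hc : c ∈ orthogonalCorrelations Q u w) : -c ∈ orthogonalCorrelations Q u w := by
  obtain ⟨φ, ψ, hφu, hψw, hφ, hψ, rfl⟩ := hc
  exact ⟨φ, -ψ, hφu, by rw [dotProduct_neg, hψw, neg_zero], hφ, by rwa [neg_dotProduct_neg],
    by rw [mulVec_neg, dotProduct_neg]⟩

theorem eigenvalues_mul_conjTranspose_le_one [DecidableEq m] {Q : Matrix m n ℝ}
    (hQ : ∀ φ, φ ᵥ* Q ⬝ᵥ φ ᵥ* Q ≤ φ ⬝ᵥ φ) (i : m) :
    (isHermitian_mul_conjTranspose_self Q).eigenvalues i ≤ 1 := by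
  set hA := isHermitian_mul_conjTranspose_self Q
  have h := hA.eigenvectorBasis_dotProduct_mulVec i (hA.eigenvectorBasis i)
  rw [hA.eigenvectorBasis_dotProduct_eigenvectorBasis, if_pos rfl, mul_one,
    dotProduct_mul_conjTranspose_mulVec] at h
  rw [← h]
  exact (hQ _).trans_eq (by rw [hA.eigenvectorBasis_dotProduct_eigenvectorBasis, if_pos rfl])

theorem sSup_orthogonalCorrelations_eq_sqrt_secondLargest [DecidableEq m] (Q : Matrix m n ℝ)
    {u : m → ℝ} {w : n → ℝ} (hQw : Q *ᵥ w = u) (huQ : u ᵥ* Q = w) (hu : u ≠ 0)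
    (hQ : ∀ φ, φ ᵥ* Q ⬝ᵥ φ ᵥ* Q ≤ φ ⬝ᵥ φ) :
    sSup (orthogonalCorrelations Q u w) =
      √(secondLargest (isHermitian_mul_conjTranspose_self Q).eigenvalues) := by
  set hA := isHermitian_mul_conjTranspose_self Q
  set l := secondLargest hA.eigenvalues
  have hAu : (Q * Qᴴ) *ᵥ u = (1 : ℝ) • u := by
    rw [← mulVec_mulVec, conjTranspose_eq_transpose_of_trivial, mulVec_transpose, huQ, hQw,
      one_smul]
  have hev := eigenvalues_mul_conjTranspose_le_one hQ
  have hub : ∀ c ∈ orthogonalCorrelations Q u w, c ≤ √l := by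
    rintro _ ⟨φ, ψ, hφu, -, hφ, hψ, rfl⟩
    calc φ ⬝ᵥ Q *ᵥ ψ ≤ √(φ ᵥ* Q ⬝ᵥ φ ᵥ* Q) * √(ψ ⬝ᵥ ψ) :=
          (dotProduct_mulVec φ Q ψ).trans_le (dotProduct_le_sqrt_mul_sqrt _ _)
      _ ≤ √l := by
          rw [hψ, Real.sqrt_one, mul_one, ← dotProduct_mul_conjTranspose_mulVec]
          refine Real.sqrt_le_sqrt ?_
          simpa only [hφ, mul_one] using
            hA.dotProduct_mulVec_le_secondLargest_mul hAu hu hev hφu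
  rcases le_or_gt l 0 with hl | hl
  · -- The set is symmetric under `ψ ↦ -ψ`, so it lies in `{0}`; it may be empty.
    have hnonpos := fun c hc => (hub c hc).trans_eq (Real.sqrt_eq_zero'.mpr hl)
    rw [Real.sqrt_eq_zero'.mpr hl]
    exact le_antisymm (Real.sSup_nonpos hnonpos) (Real.sSup_nonneg fun c hc =>
      neg_nonpos.mp (hnonpos _ (neg_mem_orthogonalCorrelations hc)))
  have : Nontrivial m :=
    not_subsingleton_iff_nontrivial.mp fun _ => hl.ne' (secondLargest_of_subsingleton _)
  obtain ⟨φ, hφ, hφu, hφA⟩ := hA.exists_orthogonal_eigenvector_secondLargest hAu hev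
  have hQφ : φ ᵥ* Q ⬝ᵥ φ ᵥ* Q = l := by
    rw [← dotProduct_mul_conjTranspose_mulVec, hφA, dotProduct_smul, hφ, smul_eq_mul, mul_one]
  refine IsGreatest.csSup_eq ⟨⟨φ, (√l)⁻¹ • φ ᵥ* Q, hφu, ?_, hφ, ?_, ?_⟩, hub⟩
  · rw [dotProduct_smul, dotProduct_comm, ← dotProduct_mulVec, hQw, dotProduct_comm, hφu,
      smul_zero]
  · rw [smul_dotProduct, dotProduct_smul, hQφ, smul_eq_mul, smul_eq_mul, ← mul_assoc, ← sq,
      inv_pow, Real.sq_sqrt hl.le, inv_mul_cancel₀ hl.ne']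
  · rw [mulVec_smul, dotProduct_smul, dotProduct_mulVec, hQφ, smul_eq_mul, inv_mul_eq_div,
      Real.div_sqrt]

end SingularValue

section Correlation

variable {X Y : Type*} {p : X → Y → ℝ}

theorem sq_sum_sum_mul_mul_le [Fintype X] [Fintype Y] (hp : ∀ x y, 0 ≤ p x y) (f : X → ℝ)
    (g : Y → ℝ) :
    (∑ x, ∑ y, p x y * f x * g y) ^ 2 ≤
      (∑ x, ∑ y, p x y * f x ^ 2) * ∑ x, ∑ y, p x y * g y ^ 2 := by
  simp only [← Fintype.sum_prod_type']
  exact Finset.sum_sq_le_sum_mul_sum_of_sq_le_mul _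
    (fun z _ => mul_nonneg (hp z.1 z.2) (sq_nonneg _))
    (fun z _ => mul_nonneg (hp z.1 z.2) (sq_nonneg _)) (fun z _ => le_of_eq (by ring))

variable {Q : Matrix X Y ℝ} {u : X → ℝ} {w : Y → ℝ}

theorem sum_sum_mul_div_fst [Fintype X] [Fintype Y] (hu : ∀ x, ∑ y, p x y = u x ^ 2)
    (hu0 : ∀ x, u x ≠ 0) (φ : X → ℝ) : ∑ x, ∑ y, p x y * (φ x / u x) = u ⬝ᵥ φ := by
  refine Finset.sum_congr rfl fun x _ => ?_
  rw [← Finset.sum_mul, hu]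
  field_simp [hu0 x]

theorem sum_sum_mul_sq_div_fst [Fintype X] [Fintype Y] (hu : ∀ x, ∑ y, p x y = u x ^ 2)
    (hu0 : ∀ x, u x ≠ 0) (φ : X → ℝ) : ∑ x, ∑ y, p x y * (φ x / u x) ^ 2 = φ ⬝ᵥ φ := by
  refine Finset.sum_congr rfl fun x _ => ?_
  rw [← Finset.sum_mul, hu]
  field_simp [hu0 x]

theorem sum_sum_mul_div_snd [Fintype X] [Fintype Y] (hw : ∀ y, ∑ x, p x y = w y ^ 2)
    (hw0 : ∀ y, w y ≠ 0) (ψ : Y → ℝ) : ∑ x, ∑ y, p x y * (ψ y / w y) = w ⬝ᵥ ψ := by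
  rw [Finset.sum_comm]
  refine Finset.sum_congr rfl fun y _ => ?_
  rw [← Finset.sum_mul, hw]
  field_simp [hw0 y]

theorem sum_sum_mul_sq_div_snd [Fintype X] [Fintype Y] (hw : ∀ y, ∑ x, p x y = w y ^ 2)
    (hw0 : ∀ y, w y ≠ 0) (ψ : Y → ℝ) : ∑ x, ∑ y, p x y * (ψ y / w y) ^ 2 = ψ ⬝ᵥ ψ := by
  rw [Finset.sum_comm]
  refine Finset.sum_congr rfl fun y _ => ?_
  rw [← Finset.sum_mul, hw]
  field_simp [hw0 y]

theorem sum_sum_mul_div_mul_div [Fintype X] [Fintype Y]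
    (hpQ : ∀ x y, p x y = u x * Q x y * w y) (hu0 : ∀ x, u x ≠ 0) (hw0 : ∀ y, w y ≠ 0)
    (φ : X → ℝ) (ψ : Y → ℝ) :
    ∑ x, ∑ y, p x y * (φ x / u x) * (ψ y / w y) = φ ⬝ᵥ Q *ᵥ ψ := by
  simp only [dotProduct, mulVec, Finset.mul_sum]
  refine Finset.sum_congr rfl fun x _ => Finset.sum_congr rfl fun y _ => ?_
  rw [hpQ]
  field_simp [hu0 x, hw0 y]

theorem mulVec_eq_of_sum_eq_sq [Fintype Y] (hpQ : ∀ x y, p x y = u x * Q x y * w y)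
    (hu : ∀ x, ∑ y, p x y = u x ^ 2) (hu0 : ∀ x, u x ≠ 0) : Q *ᵥ w = u := by
  funext x
  have h := hu x
  simp only [hpQ, mul_assoc, ← Finset.mul_sum, sq] at h
  exact mul_left_cancel₀ (hu0 x) h

theorem vecMul_eq_of_sum_eq_sq [Fintype X] (hpQ : ∀ x y, p x y = u x * Q x y * w y)
    (hw : ∀ y, ∑ x, p x y = w y ^ 2) (hw0 : ∀ y, w y ≠ 0) : u ᵥ* Q = w := by
  funext y
  have h := hw y
  simp only [hpQ, ← Finset.sum_mul, sq] at h
  exact mul_right_cancel₀ (hw0 y) h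

theorem vecMul_dotProduct_vecMul_le [Fintype X] [Fintype Y] (hp : ∀ x y, 0 ≤ p x y)
    (hpQ : ∀ x y, p x y = u x * Q x y * w y) (hu : ∀ x, ∑ y, p x y = u x ^ 2)
    (hw : ∀ y, ∑ x, p x y = w y ^ 2) (hu0 : ∀ x, u x ≠ 0) (hw0 : ∀ y, w y ≠ 0) (φ : X → ℝ) :
    φ ᵥ* Q ⬝ᵥ φ ᵥ* Q ≤ φ ⬝ᵥ φ := by
  have hcs := sq_sum_sum_mul_mul_le hp (fun x => φ x / u x) (fun y => (φ ᵥ* Q) y / w y)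
  rw [sum_sum_mul_div_mul_div hpQ hu0 hw0, dotProduct_mulVec, sum_sum_mul_sq_div_fst hu hu0,
    sum_sum_mul_sq_div_snd hw hw0, sq] at hcs
  have hφ : 0 ≤ φ ⬝ᵥ φ := Finset.sum_nonneg fun x _ => mul_self_nonneg _
  have hψ : 0 ≤ φ ᵥ* Q ⬝ᵥ φ ᵥ* Q := Finset.sum_nonneg fun y _ => mul_self_nonneg _
  nlinarith

theorem maxCorr_eq_sSup_orthogonalCorrelations [Fintype X] [Fintype Y]
    (hpQ : ∀ x y, p x y = u x * Q x y * w y) (hu : ∀ x, ∑ y, p x y = u x ^ 2)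
    (hw : ∀ y, ∑ x, p x y = w y ^ 2) (hu0 : ∀ x, u x ≠ 0) (hw0 : ∀ y, w y ≠ 0) :
    maxCorr p = sSup (orthogonalCorrelations Q u w) := by
  unfold maxCorr
  congr 1
  ext c
  constructor
  · rintro ⟨f, g, hf, hg, hf2, hg2, rfl⟩
    have hf' : ∀ x, u x * f x / u x = f x := fun x => mul_div_cancel_left₀ _ (hu0 x)
    have hg' : ∀ y, w y * g y / w y = g y := fun y => mul_div_cancel_left₀ _ (hw0 y)
    refine ⟨u * f, w * g, ?_, ?_, ?_, ?_, ?_⟩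
    · simpa only [← sum_sum_mul_div_fst hu hu0, Pi.mul_apply, hf'] using hf
    · simpa only [← sum_sum_mul_div_snd hw hw0, Pi.mul_apply, hg'] using hg
    · simpa only [← sum_sum_mul_sq_div_fst hu hu0, Pi.mul_apply, hf'] using hf2
    · simpa only [← sum_sum_mul_sq_div_snd hw hw0, Pi.mul_apply, hg'] using hg2
    · simp only [← sum_sum_mul_div_mul_div hpQ hu0 hw0, Pi.mul_apply, hf', hg']
  · rintro ⟨φ, ψ, hφ, hψ, hφ2, hψ2, rfl⟩
    exact ⟨fun x => φ x / u x, fun y => ψ y / w y, by rwa [sum_sum_mul_div_fst hu hu0],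
      by rwa [sum_sum_mul_div_snd hw hw0], by rwa [sum_sum_mul_sq_div_fst hu hu0],
      by rwa [sum_sum_mul_sq_div_snd hw hw0], (sum_sum_mul_div_mul_div hpQ hu0 hw0 φ ψ).symm⟩

end Correlation

/-- the maximal correlation equals the second largest singular value of the
matrix `Q` with `Q x y = p(x,y)/√(p(x)p(y))`.  The singular values of `Q` are the square
roots of the eigenvalues of `Q * Qᴴ`, and the second largest value of a finite family `e`
is `sup_{i ≠ j} min (e i) (e j)`. -/
theorem maxCorr_eq_second_singular_value {X Y : Type*} [Fintype X] [DecidableEq X]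
    [Fintype Y] (p : X → Y → ℝ) (hp : IsJointPMF p)
    (hx : ∀ x, 0 < ∑ y, p x y) (hy : ∀ y, 0 < ∑ x, p x y)
    (Q : Matrix X Y ℝ)
    (hQ : ∀ x y, Q x y = p x y / Real.sqrt ((∑ y', p x y') * (∑ x', p x' y))) :
    maxCorr p = sSup {c : ℝ | ∃ i j : X, i ≠ j ∧
      c = min (Real.sqrt ((Matrix.isHermitian_mul_conjTranspose_self Q).eigenvalues i))
              (Real.sqrt ((Matrix.isHermitian_mul_conjTranspose_self Q).eigenvalues j))} := by
  set u : X → ℝ := fun x => √(∑ y, p x y)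
  set w : Y → ℝ := fun y => √(∑ x, p x y)
  have hu : ∀ x, ∑ y, p x y = u x ^ 2 := fun x => (Real.sq_sqrt (hx x).le).symm
  have hw : ∀ y, ∑ x, p x y = w y ^ 2 := fun y => (Real.sq_sqrt (hy y).le).symm
  have hu0 : ∀ x, u x ≠ 0 := fun x => (Real.sqrt_pos.mpr (hx x)).ne'
  have hw0 : ∀ y, w y ≠ 0 := fun y => (Real.sqrt_pos.mpr (hy y)).ne'
  have hpQ : ∀ x y, p x y = u x * Q x y * w y := fun x y => by
    rw [hQ, Real.sqrt_mul (hx x).le]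
    change p x y = u x * (p x y / (u x * w y)) * w y
    field_simp [hu0 x, hw0 y]
  have huu : u ⬝ᵥ u = 1 := by simpa only [dotProduct, ← sq, ← hu] using hp.2
  rw [maxCorr_eq_sSup_orthogonalCorrelations hpQ hu hw hu0 hw0,
    sSup_orthogonalCorrelations_eq_sqrt_secondLargest Q (mulVec_eq_of_sum_eq_sq hpQ hu hu0)
      (vecMul_eq_of_sum_eq_sq hpQ hw hw0) (fun h => by simp [h] at huu)
      (vecMul_dotProduct_vecMul_le hp.1 hpQ hu hw hu0 hw0),
    ← Monotone.secondLargest_comp (fun _ _ => Real.sqrt_le_sqrt) Real.sqrt_zero]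
  rfl
end

section
/- If X and Y are finite-valued random variables and at least one of them takes at most two values, then ρ_m(X;Y)² = (Σ_{x,y} p(x,y)²/(p(x)p(y))) − 1. -/
open scoped BigOperators

/-!
Write `P`, `Q` for the marginals and call a function standardized when it has mean `0` and second
moment `1`. For a standardized `f` of `X`, the correlations with standardized `g` of `Y` are
`∑ y, d y * g y` with `d y = ∑ x, p x y * f x`; since `∑ y, d y = 0`, weighted Cauchy–Schwarz shows
that their supremum is `√(∑ y, d y ^ 2 / Q y)`, attained at `g ∝ d / Q`. When `X = {a, b}`,
standardization forces `f a * f b = -1` and `P a * f a ^ 2 = P b`, which makes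
`∑ y, d y ^ 2 / Q y` equal to the χ²-information for every standardized `f`. If `X` or `Y` is a
single point there is no standardized function, and `maxCorr p = sSup ∅ = 0` matches the vanishing
χ²-information.
-/

open Finset

section Standardized

variable {Y : Type*} [Fintype Y]

def IsStandardized (w g : Y → ℝ) : Prop :=
  ∑ y, w y * g y = 0 ∧ ∑ y, w y * g y ^ 2 = 1

lemma not_isStandardized_of_subsingleton [Subsingleton Y] (w g : Y → ℝ) :
    ¬ IsStandardized w g := by
  rintro ⟨h0, h1⟩
  cases isEmpty_or_nonempty Y with
  | inl _ => simp at h1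
  | inr h =>
    obtain ⟨y⟩ := h
    rw [Fintype.sum_subsingleton _ y] at h0 h1
    rw [show w y * g y ^ 2 = w y * g y * g y by ring, h0, zero_mul] at h1
    exact zero_ne_one h1

lemma isStandardized_div_sqrt {w g : Y → ℝ} {s : ℝ} (h0 : ∑ y, w y * g y = 0)
    (hs : ∑ y, w y * g y ^ 2 = s) (hs_pos : 0 < s) :
    IsStandardized w (fun y => g y / √s) := by
  constructor
  · simp_rw [mul_div_assoc', ← sum_div, h0, zero_div]
  · simp_rw [div_pow, Real.sq_sqrt hs_pos.le, mul_div_assoc', ← sum_div, hs, div_self hs_pos.ne']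

lemma exists_isStandardized {w : Y → ℝ} (hw : ∀ y, 0 < w y) (hY : 1 < Fintype.card Y) :
    ∃ g, IsStandardized w g := by
  classical
  obtain ⟨a, b, hab⟩ := Fintype.exists_pair_of_one_lt_card hY
  set g : Y → ℝ := Pi.single a (w a)⁻¹ - Pi.single b (w b)⁻¹
  have h0 : ∑ y, w y * g y = 0 := by
    simp [g, Pi.single_apply, mul_sub, sum_sub_distrib, (hw a).ne', (hw b).ne']
  have hs : 0 < ∑ y, w y * g y ^ 2 := by
    refine sum_pos' (fun y _ => mul_nonneg (hw y).le (sq_nonneg _)) ⟨a, mem_univ a, ?_⟩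
    have : g a ≠ 0 := by simp [g, hab, (hw a).ne']
    exact mul_pos (hw a) (sq_pos_of_ne_zero this)
  exact ⟨_, isStandardized_div_sqrt h0 rfl hs⟩

lemma sum_mul_le_sqrt_sum_sq_div {w d g : Y → ℝ} (hw : ∀ y, 0 < w y)
    (hg : ∑ y, w y * g y ^ 2 = 1) :
    ∑ y, d y * g y ≤ √(∑ y, d y ^ 2 / w y) := by
  refine Real.le_sqrt_of_sq_le ?_
  calc (∑ y, d y * g y) ^ 2 ≤ (∑ y, d y ^ 2 / w y) * ∑ y, w y * g y ^ 2 :=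
        sum_sq_le_sum_mul_sum_of_sq_le_mul _ (fun y _ => div_nonneg (sq_nonneg _) (hw y).le)
          (fun y _ => mul_nonneg (hw y).le (sq_nonneg _))
          (fun y _ => le_of_eq (by field_simp [(hw y).ne']))
    _ = ∑ y, d y ^ 2 / w y := by rw [hg, mul_one]

lemma isGreatest_sum_mul_of_isStandardized {w d : Y → ℝ} (hw : ∀ y, 0 < w y)
    (hd : ∑ y, d y = 0) (hY : 1 < Fintype.card Y) :
    IsGreatest {c | ∃ g, IsStandardized w g ∧ c = ∑ y, d y * g y} √(∑ y, d y ^ 2 / w y) := by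
  refine ⟨?_, fun c ⟨g, hg, hc⟩ => hc ▸ sum_mul_le_sqrt_sum_sq_div hw hg.2⟩
  have hterm : ∀ y ∈ univ, 0 ≤ d y ^ 2 / w y := fun y _ => div_nonneg (sq_nonneg _) (hw y).le
  rcases (sum_nonneg hterm).eq_or_lt with hS0 | hS_pos
  · obtain ⟨g, hg⟩ := exists_isStandardized hw hY
    have hd0 : ∀ y, d y = 0 := fun y => by
      simpa [(hw y).ne'] using (sum_eq_zero_iff_of_nonneg hterm).mp hS0.symm y (mem_univ y)
    exact ⟨g, hg, by rw [← hS0, Real.sqrt_zero]; simp [hd0]⟩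
  · have h0 : ∑ y, w y * (d y / w y) = 0 := by
      simpa [mul_div_cancel₀ _ (hw _).ne'] using hd
    have hs : ∑ y, w y * (d y / w y) ^ 2 = ∑ y, d y ^ 2 / w y :=
      sum_congr rfl fun y _ => by field_simp [(hw y).ne']
    refine ⟨_, isStandardized_div_sqrt h0 hs hS_pos, ?_⟩
    calc √(∑ y, d y ^ 2 / w y) = (∑ y, d y ^ 2 / w y) / √(∑ y, d y ^ 2 / w y) :=
          Real.div_sqrt.symm
      _ = _ := by
        rw [sum_div]
        exact sum_congr rfl fun y _ => by ring

end Standardized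

section MaxCorr

variable {X Y : Type*} [Fintype X] [Fintype Y]

/-- The χ²-divergence of `p` from the product of its marginals. -/
noncomputable def chiSqInfo (p : X → Y → ℝ) : ℝ :=
  (∑ x, ∑ y, p x y ^ 2 / ((∑ y', p x y') * (∑ x', p x' y))) - 1

lemma chiSqInfo_transpose (p : X → Y → ℝ) : chiSqInfo (fun y x => p x y) = chiSqInfo p := by
  unfold chiSqInfo
  rw [sum_comm]
  simp_rw [mul_comm]

lemma maxCorr_eq_sSup_isStandardized (p : X → Y → ℝ) :
    maxCorr p = sSup {c | ∃ f g, IsStandardized (fun x => ∑ y, p x y) f ∧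
      IsStandardized (fun y => ∑ x, p x y) g ∧ c = ∑ y, (∑ x, p x y * f x) * g y} := by
  have hX : ∀ f : X → ℝ, ∑ x, ∑ y, p x y * f x = ∑ x, (∑ y, p x y) * f x := fun f => by
    simp only [sum_mul]
  have hY : ∀ g : Y → ℝ, ∑ x, ∑ y, p x y * g y = ∑ y, (∑ x, p x y) * g y := fun g => by
    rw [sum_comm]; simp only [sum_mul]
  have hXY : ∀ (f : X → ℝ) (g : Y → ℝ),
      ∑ x, ∑ y, p x y * f x * g y = ∑ y, (∑ x, p x y * f x) * g y := fun f g => by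
    rw [sum_comm]; simp only [sum_mul]
  unfold maxCorr IsStandardized
  simp only [hX, hY, hXY]
  congr 1
  ext c
  exact ⟨fun ⟨f, g, hf₀, hg₀, hf₁, hg₁, hc⟩ => ⟨f, g, ⟨hf₀, hf₁⟩, ⟨hg₀, hg₁⟩, hc⟩,
    fun ⟨f, g, ⟨hf₀, hf₁⟩, ⟨hg₀, hg₁⟩, hc⟩ => ⟨f, g, hf₀, hg₀, hf₁, hg₁, hc⟩⟩

lemma maxCorr_transpose (p : X → Y → ℝ) : maxCorr (fun y x => p x y) = maxCorr p := by
  have hswap : ∀ (f : X → ℝ) (g : Y → ℝ),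
      ∑ x, (∑ y, p x y * g y) * f x = ∑ y, (∑ x, p x y * f x) * g y := fun f g => by
    simp only [sum_mul]; rw [sum_comm]; simp only [mul_right_comm]
  simp only [maxCorr_eq_sSup_isStandardized]
  congr 1
  ext c
  exact ⟨fun ⟨g, f, hg, hf, hc⟩ => ⟨f, g, hf, hg, hc.trans (hswap f g)⟩,
    fun ⟨f, g, hf, hg, hc⟩ => ⟨g, f, hg, hf, hc.trans (hswap f g).symm⟩⟩

lemma maxCorr_eq_zero_of_subsingleton [Subsingleton X] (p : X → Y → ℝ) : maxCorr p = 0 := by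
  rw [maxCorr_eq_sSup_isStandardized, ← Real.sSup_empty]
  congr 1
  ext c
  simp [not_isStandardized_of_subsingleton]

lemma chiSqInfo_eq_zero_of_subsingleton [Subsingleton X] {p : X → Y → ℝ}
    (hp : ∑ x, ∑ y, p x y = 1) : chiSqInfo p = 0 := by
  cases isEmpty_or_nonempty X with
  | inl _ => simp at hp
  | inr h =>
    obtain ⟨x⟩ := h
    simp only [chiSqInfo, Fintype.sum_subsingleton _ x] at hp ⊢
    simp [hp, sq, mul_self_div_self]

lemma chiSqInfo_eq_sum_sq_div_of_card_eq_two {p : X → Y → ℝ} (hp : ∑ x, ∑ y, p x y = 1)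
    (hx : ∀ x, 0 < ∑ y, p x y) (hy : ∀ y, 0 < ∑ x, p x y) (hX : Fintype.card X = 2)
    {f : X → ℝ} (hf : IsStandardized (fun x => ∑ y, p x y) f) :
    chiSqInfo p = ∑ y, (∑ x, p x y * f x) ^ 2 / ∑ x, p x y := by
  classical
  obtain ⟨a, b, hab, huniv⟩ := card_eq_two.mp hX
  have hsum : ∀ F : X → ℝ, ∑ x, F x = F a + F b := fun F => by rw [huniv, sum_pair hab]
  have hPa := (hx a).ne'
  have hPb := (hx b).ne'
  obtain ⟨hf₀, hf₁⟩ := hf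
  simp only [chiSqInfo, hsum] at hp hy hf₀ hf₁ ⊢
  set Pa := ∑ y, p a y
  set Pb := ∑ y, p b y
  have hfab : f a * f b = -1 := by linear_combination (f a + f b) * hf₀ - hf₁ - f a * f b * hp
  have hfa : Pa * f a ^ 2 = Pb := by linear_combination f a * hf₀ - Pb * hfab
  have hfb : Pb * f b ^ 2 = Pa := by linear_combination f b * hf₀ - Pa * hfab
  have hP : Pa + Pb = 1 := hp
  rw [← sum_add_distrib] at hp
  rw [← hp, ← sum_add_distrib, ← sum_sub_distrib]
  refine sum_congr rfl fun y _ => ?_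
  have hq := (hy y).ne'
  field_simp
  linear_combination -(p a y ^ 2 * Pb * hfa + p b y ^ 2 * Pa * hfb
    + 2 * p a y * p b y * Pa * Pb * hfab + (p a y ^ 2 * Pb + p b y ^ 2 * Pa) * hP)

lemma maxCorr_sq_of_card_eq_two {p : X → Y → ℝ} (hp : ∑ x, ∑ y, p x y = 1)
    (hx : ∀ x, 0 < ∑ y, p x y) (hy : ∀ y, 0 < ∑ x, p x y) (hX : Fintype.card X = 2)
    (hY : 1 < Fintype.card Y) :
    maxCorr p ^ 2 = chiSqInfo p := by
  have hgreatest : ∀ f, IsStandardized (fun x => ∑ y, p x y) f →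
      IsGreatest {c | ∃ g, IsStandardized (fun y => ∑ x, p x y) g ∧
        c = ∑ y, (∑ x, p x y * f x) * g y} √(chiSqInfo p) := fun f hf => by
    rw [chiSqInfo_eq_sum_sq_div_of_card_eq_two hp hx hy hX hf]
    refine isGreatest_sum_mul_of_isStandardized hy ?_ hY
    rw [sum_comm]
    simpa only [sum_mul] using hf.1
  obtain ⟨f₀, hf₀⟩ := exists_isStandardized hx (by omega)
  have hmax : maxCorr p = √(chiSqInfo p) := by
    rw [maxCorr_eq_sSup_isStandardized]
    refine IsGreatest.csSup_eq ⟨?_, ?_⟩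
    · obtain ⟨g, hg, hc⟩ := (hgreatest f₀ hf₀).1
      exact ⟨f₀, g, hf₀, hg, hc⟩
    · rintro c ⟨f, g, hf, hg, rfl⟩
      exact (hgreatest f hf).2 ⟨g, hg, rfl⟩
  rw [hmax, Real.sq_sqrt]
  rw [chiSqInfo_eq_sum_sq_div_of_card_eq_two hp hx hy hX hf₀]
  exact sum_nonneg fun y _ => div_nonneg (sq_nonneg _) (hy y).le

lemma maxCorr_sq_of_subsingleton [Subsingleton X] {p : X → Y → ℝ}
    (hp : ∑ x, ∑ y, p x y = 1) : maxCorr p ^ 2 = chiSqInfo p := by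
  rw [maxCorr_eq_zero_of_subsingleton, chiSqInfo_eq_zero_of_subsingleton hp, sq, zero_mul]

lemma maxCorr_sq_of_card_le_two {p : X → Y → ℝ} (hp : ∑ x, ∑ y, p x y = 1)
    (hx : ∀ x, 0 < ∑ y, p x y) (hy : ∀ y, 0 < ∑ x, p x y) (hX : Fintype.card X ≤ 2) :
    maxCorr p ^ 2 = chiSqInfo p := by
  rcases Nat.lt_or_ge (Fintype.card X) 2 with hX₁ | hX₂
  · have := Fintype.card_le_one_iff_subsingleton.mp (Nat.le_of_lt_succ hX₁)
    exact maxCorr_sq_of_subsingleton hp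
  rcases Nat.lt_or_ge (Fintype.card Y) 2 with hY₁ | hY₂
  · have := Fintype.card_le_one_iff_subsingleton.mp (Nat.le_of_lt_succ hY₁)
    rw [← maxCorr_transpose, ← chiSqInfo_transpose]
    exact maxCorr_sq_of_subsingleton (by rwa [sum_comm])
  exact maxCorr_sq_of_card_eq_two hp hx hy (le_antisymm hX hX₂) hY₂

end MaxCorr

/-- if `X` or `Y` takes at most two values, then
`ρ_m(X;Y)² = (Σ_{x,y} p(x,y)²/(p(x)p(y))) − 1`. -/
theorem maxCorr_sq_of_binary {X Y : Type*} [Fintype X] [Fintype Y]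
    (p : X → Y → ℝ) (hp : IsJointPMF p)
    (hx : ∀ x, 0 < ∑ y, p x y) (hy : ∀ y, 0 < ∑ x, p x y)
    (hcard : Fintype.card X ≤ 2 ∨ Fintype.card Y ≤ 2) :
    (maxCorr p)^2
      = (∑ x, ∑ y, (p x y)^2 / ((∑ y', p x y') * (∑ x', p x' y))) - 1 := by
  change maxCorr p ^ 2 = chiSqInfo p
  rcases hcard with hX | hY
  · exact maxCorr_sq_of_card_le_two hp.2 hx hy hX
  · rw [← maxCorr_transpose, ← chiSqInfo_transpose]
    exact maxCorr_sq_of_card_le_two (by rw [sum_comm]; exact hp.2) hy hx hY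
end

section
/- If (X₁,Y₁) and (X₂,Y₂) are independent pairs of finite-valued random variables, then ρ_m((X₁,X₂);(Y₁,Y₂)) = max{ρ_m(X₁;Y₁), ρ_m(X₂;Y₂)}. -/
open scoped BigOperators

open Finset

noncomputable section

def corrSet {X Y : Type*} [Fintype X] [Fintype Y] (p : X → Y → ℝ) : Set ℝ :=
  {c : ℝ | ∃ f : X → ℝ, ∃ g : Y → ℝ,
    (∑ x, ∑ y, p x y * f x) = 0 ∧ (∑ x, ∑ y, p x y * g y) = 0 ∧
    (∑ x, ∑ y, p x y * (f x)^2) = 1 ∧ (∑ x, ∑ y, p x y * (g y)^2) = 1 ∧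
    c = ∑ x, ∑ y, p x y * f x * g y}

lemma maxCorr_eq {X Y : Type*} [Fintype X] [Fintype Y] (p : X → Y → ℝ) :
    maxCorr p = sSup (corrSet p) := rfl

variable {X Y : Type*} [Fintype X] [Fintype Y]

lemma wCS {Z : Type*} [Fintype Z] (w u v : Z → ℝ) (hw : ∀ z, 0 ≤ w z) :
    (∑ z, w z * u z * v z)^2 ≤ (∑ z, w z * u z^2) * (∑ z, w z * v z^2) := by
  have h := Finset.sum_mul_sq_le_sq_mul_sq Finset.univ
    (fun z => Real.sqrt (w z) * u z) (fun z => Real.sqrt (w z) * v z)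
  have e1 : ∀ z : Z, (Real.sqrt (w z) * u z) * (Real.sqrt (w z) * v z) = w z * u z * v z := by
    intro z
    have h := Real.mul_self_sqrt (hw z)
    linear_combination (u z * v z) * h
  have e2 : ∀ z : Z, (Real.sqrt (w z) * u z)^2 = w z * u z^2 := by
    intro z
    rw [mul_pow, Real.sq_sqrt (hw z)]
  have e3 : ∀ z : Z, (Real.sqrt (w z) * v z)^2 = w z * v z^2 := by
    intro z
    rw [mul_pow, Real.sq_sqrt (hw z)]
  simp only [e1, e2, e3] at h
  exact h

lemma wCS2 (q : X → Y → ℝ) (hq : ∀ x y, 0 ≤ q x y) (u : X → ℝ) (v : Y → ℝ) :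
    (∑ x, ∑ y, q x y * u x * v y)^2
      ≤ (∑ x, ∑ y, q x y * u x^2) * (∑ x, ∑ y, q x y * v y^2) := by
  have h := wCS (fun z : X × Y => q z.1 z.2) (fun z => u z.1) (fun z => v z.2)
    (fun z => hq z.1 z.2)
  simpa [Fintype.sum_prod_type] using h

lemma corrSet_bddAbove (p : X → Y → ℝ) (hp : ∀ x y, 0 ≤ p x y) :
    BddAbove (corrSet p) := by
  refine ⟨1, fun c hc => ?_⟩
  obtain ⟨f, g, _, _, hf2, hg2, hc⟩ := hc
  have h := wCS2 p hp f g
  rw [hf2, hg2] at h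
  nlinarith [h, sq_nonneg c]

lemma corrSet_neg {p : X → Y → ℝ} {c : ℝ} (hc : c ∈ corrSet p) : -c ∈ corrSet p := by
  obtain ⟨f, g, h1, h2, h3, h4, h5⟩ := hc
  refine ⟨fun x => -f x, g, ?_, h2, ?_, h4, ?_⟩
  · simp only [mul_neg, Finset.sum_neg_distrib, h1, neg_zero]
  · simpa using h3
  · simp only [h5, mul_neg, neg_mul, Finset.sum_neg_distrib]

lemma maxCorr_nonneg (p : X → Y → ℝ) (hp : ∀ x y, 0 ≤ p x y) : 0 ≤ maxCorr p := by
  rw [maxCorr_eq]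
  rcases Set.eq_empty_or_nonempty (corrSet p) with h | ⟨c, hc⟩
  · rw [h, Real.sSup_empty]
  · have h1 := le_csSup (corrSet_bddAbove p hp) hc
    have h2 := le_csSup (corrSet_bddAbove p hp) (corrSet_neg hc)
    linarith

lemma key (p : X → Y → ℝ) (hp : ∀ x y, 0 ≤ p x y) (f : X → ℝ) (g : Y → ℝ)
    (hf : ∑ x, ∑ y, p x y * f x = 0) (hg : ∑ x, ∑ y, p x y * g y = 0) :
    ∑ x, ∑ y, p x y * f x * g y ≤
      maxCorr p * (Real.sqrt (∑ x, ∑ y, p x y * (f x)^2)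
        * Real.sqrt (∑ x, ∑ y, p x y * (g y)^2)) := by
  set A := ∑ x, ∑ y, p x y * (f x)^2 with hA
  set B := ∑ x, ∑ y, p x y * (g y)^2 with hB
  have hA0 : 0 ≤ A := Finset.sum_nonneg fun x _ => Finset.sum_nonneg fun y _ =>
    mul_nonneg (hp x y) (sq_nonneg _)
  have hB0 : 0 ≤ B := Finset.sum_nonneg fun x _ => Finset.sum_nonneg fun y _ =>
    mul_nonneg (hp x y) (sq_nonneg _)
  have hCS := wCS2 p hp f g
  rw [← hA, ← hB] at hCS
  rcases eq_or_lt_of_le hA0 with hA' | hA'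
  · have : (∑ x, ∑ y, p x y * f x * g y)^2 ≤ 0 := by rw [← hA'] at hCS; linarith [hCS]
    have h0 : ∑ x, ∑ y, p x y * f x * g y = 0 := by nlinarith [sq_nonneg (∑ x, ∑ y, p x y * f x * g y)]
    rw [h0, ← hA', Real.sqrt_zero]
    simp
  rcases eq_or_lt_of_le hB0 with hB' | hB'
  · have : (∑ x, ∑ y, p x y * f x * g y)^2 ≤ 0 := by rw [← hB'] at hCS; nlinarith
    have h0 : ∑ x, ∑ y, p x y * f x * g y = 0 := by nlinarith [sq_nonneg (∑ x, ∑ y, p x y * f x * g y)]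
    rw [h0, ← hB', Real.sqrt_zero]
    simp
  · -- A, B > 0
    have hsA : 0 < Real.sqrt A := Real.sqrt_pos.mpr hA'
    have hsB : 0 < Real.sqrt B := Real.sqrt_pos.mpr hB'
    have hA2 : Real.sqrt A ^ 2 = A := Real.sq_sqrt hA0
    have hB2 : Real.sqrt B ^ 2 = B := Real.sq_sqrt hB0
    set c' := (∑ x, ∑ y, p x y * f x * g y) / (Real.sqrt A * Real.sqrt B) with hc'
    have hmem : c' ∈ corrSet p := by
      refine ⟨fun x => f x / Real.sqrt A, fun y => g y / Real.sqrt B, ?_, ?_, ?_, ?_, ?_⟩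
      · have e : ∀ x y, p x y * (f x / Real.sqrt A) = (p x y * f x) / Real.sqrt A :=
          fun x y => by ring
        simp only [e, ← Finset.sum_div, hf, zero_div]
      · have e : ∀ x y, p x y * (g y / Real.sqrt B) = (p x y * g y) / Real.sqrt B :=
          fun x y => by ring
        simp only [e, ← Finset.sum_div, hg, zero_div]
      · have e : ∀ x y, p x y * (f x / Real.sqrt A)^2 = (p x y * (f x)^2) / A := by
          intro x y
          rw [div_pow, hA2]
          ring
        simp only [e, ← Finset.sum_div, ← hA]
        exact div_self (ne_of_gt hA')
      · have e : ∀ x y, p x y * (g y / Real.sqrt B)^2 = (p x y * (g y)^2) / B := by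
          intro x y
          rw [div_pow, hB2]
          ring
        simp only [e, ← Finset.sum_div, ← hB]
        exact div_self (ne_of_gt hB')
      · have e : ∀ x y, p x y * (f x / Real.sqrt A) * (g y / Real.sqrt B)
            = (p x y * f x * g y) / (Real.sqrt A * Real.sqrt B) := fun x y => by ring
        simp only [e, ← Finset.sum_div, hc']
    have hle : c' ≤ maxCorr p := le_csSup (corrSet_bddAbove p hp) hmem
    have : ∑ x, ∑ y, p x y * f x * g y = c' * (Real.sqrt A * Real.sqrt B) := by
      rw [hc', div_mul_cancel₀]
      positivity
    rw [this]
    have := mul_le_mul_of_nonneg_right hle (by positivity : (0:ℝ) ≤ Real.sqrt A * Real.sqrt B)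
    linarith

lemma sum4_comm {A B C D : Type*} [Fintype A] [Fintype B] [Fintype C] [Fintype D]
    (t : A → B → C → D → ℝ) :
    ∑ a, ∑ b, ∑ c, ∑ d, t a b c d = ∑ b, ∑ d, ∑ a, ∑ c, t a b c d := by
  rw [Finset.sum_comm]
  refine Finset.sum_congr rfl fun b _ => ?_
  rw [show (∑ a, ∑ c, ∑ d, t a b c d) = ∑ a, ∑ d, ∑ c, t a b c d from
    Finset.sum_congr rfl fun a _ => Finset.sum_comm]
  exact Finset.sum_comm

lemma sum_split {X₁ Y₁ X₂ Y₂ : Type*} [Fintype X₁] [Fintype Y₁] [Fintype X₂] [Fintype Y₂]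
    (h₁ : X₁ → Y₁ → ℝ) (h₂ : X₂ → Y₂ → ℝ) (F : X₁ → X₂ → Y₁ → Y₂ → ℝ) :
    ∑ a : X₁ × X₂, ∑ b : Y₁ × Y₂, h₁ a.1 b.1 * h₂ a.2 b.2 * F a.1 a.2 b.1 b.2
      = ∑ x₂, ∑ y₂, h₂ x₂ y₂ * ∑ x₁, ∑ y₁, h₁ x₁ y₁ * F x₁ x₂ y₁ y₂ := by
  have step : ∑ a : X₁ × X₂, ∑ b : Y₁ × Y₂, h₁ a.1 b.1 * h₂ a.2 b.2 * F a.1 a.2 b.1 b.2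
      = ∑ x₁, ∑ x₂, ∑ y₁, ∑ y₂, h₁ x₁ y₁ * h₂ x₂ y₂ * F x₁ x₂ y₁ y₂ := by
    simp only [Fintype.sum_prod_type]
  rw [step, sum4_comm]
  refine Finset.sum_congr rfl fun x₂ _ => Finset.sum_congr rfl fun y₂ _ => ?_
  rw [Finset.mul_sum]
  refine Finset.sum_congr rfl fun x₁ _ => ?_
  rw [Finset.mul_sum]
  refine Finset.sum_congr rfl fun y₁ _ => ?_
  ring

lemma centered_mean (p : X → Y → ℝ) (hsum : ∑ x, ∑ y, p x y = 1)
    (f : X → ℝ) (μ : ℝ) (hμ : ∑ x, ∑ y, p x y * f x = μ) :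
    ∑ x, ∑ y, p x y * (f x - μ) = 0 := by
  have e : ∀ x y, p x y * (f x - μ) = p x y * f x - μ * p x y := fun x y => by ring
  simp only [e, Finset.sum_sub_distrib, ← Finset.mul_sum, hμ, hsum]
  ring

lemma centered_sq (p : X → Y → ℝ) (hsum : ∑ x, ∑ y, p x y = 1)
    (f : X → ℝ) (μ : ℝ) (hμ : ∑ x, ∑ y, p x y * f x = μ) :
    ∑ x, ∑ y, p x y * (f x - μ)^2 = (∑ x, ∑ y, p x y * (f x)^2) - μ^2 := by
  have e : ∀ x y, p x y * (f x - μ)^2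
      = p x y * (f x)^2 - 2 * μ * (p x y * f x) + μ^2 * (p x y) := fun x y => by ring
  simp only [e, Finset.sum_add_distrib, Finset.sum_sub_distrib, ← Finset.mul_sum, hμ, hsum]
  ring

lemma centered_mean' (p : X → Y → ℝ) (hsum : ∑ x, ∑ y, p x y = 1)
    (g : Y → ℝ) (ν : ℝ) (hν : ∑ x, ∑ y, p x y * g y = ν) :
    ∑ x, ∑ y, p x y * (g y - ν) = 0 := by
  have e : ∀ x y, p x y * (g y - ν) = p x y * g y - ν * p x y := fun x y => by ring
  simp only [e, Finset.sum_sub_distrib, ← Finset.mul_sum, hν, hsum]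
  ring

lemma centered_sq' (p : X → Y → ℝ) (hsum : ∑ x, ∑ y, p x y = 1)
    (g : Y → ℝ) (ν : ℝ) (hν : ∑ x, ∑ y, p x y * g y = ν) :
    ∑ x, ∑ y, p x y * (g y - ν)^2 = (∑ x, ∑ y, p x y * (g y)^2) - ν^2 := by
  have e : ∀ x y, p x y * (g y - ν)^2
      = p x y * (g y)^2 - 2 * ν * (p x y * g y) + ν^2 * (p x y) := fun x y => by ring
  simp only [e, Finset.sum_add_distrib, Finset.sum_sub_distrib, ← Finset.mul_sum, hν, hsum]
  ring

lemma centered_cross (p : X → Y → ℝ) (hsum : ∑ x, ∑ y, p x y = 1)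
    (f : X → ℝ) (g : Y → ℝ) (μ ν : ℝ)
    (hμ : ∑ x, ∑ y, p x y * f x = μ) (hν : ∑ x, ∑ y, p x y * g y = ν) :
    ∑ x, ∑ y, p x y * (f x - μ) * (g y - ν)
      = (∑ x, ∑ y, p x y * f x * g y) - μ * ν := by
  have e : ∀ x y, p x y * (f x - μ) * (g y - ν)
      = p x y * f x * g y - ν * (p x y * f x) - μ * (p x y * g y) + μ * ν * (p x y) :=
    fun x y => by ring
  simp only [e, Finset.sum_add_distrib, Finset.sum_sub_distrib, ← Finset.mul_sum, hμ, hν, hsum]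
  ring


lemma const_out {X Y : Type*} [Fintype X] [Fintype Y] (q : X → Y → ℝ) (c : ℝ) :
    ∑ x, ∑ y, q x y * c = (∑ x, ∑ y, q x y) * c := by
  simp only [← Finset.sum_mul]

lemma final_step {X₂ Y₂ : Type*} [Fintype X₂] [Fintype Y₂]
    (q : X₂ → Y₂ → ℝ) (hq0 : ∀ x y, 0 ≤ q x y)
    (m : X₂ → ℝ) (n : Y₂ → ℝ) (T : X₂ → ℝ) (U : Y₂ → ℝ) (ρ₁ : ℝ) (hρ₁ : 0 ≤ ρ₁)
    (hm : ∑ x, ∑ y, q x y * m x = 0) (hn : ∑ x, ∑ y, q x y * n y = 0)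
    (hT : ∑ x, ∑ y, q x y * T x = 1) (hU : ∑ x, ∑ y, q x y * U y = 1)
    (hTm : ∀ x, 0 ≤ T x - m x ^ 2) (hUn : ∀ y, 0 ≤ U y - n y ^ 2) :
    ∑ x, ∑ y, q x y *
        (m x * n y + ρ₁ * (Real.sqrt (T x - m x ^ 2) * Real.sqrt (U y - n y ^ 2)))
      ≤ max ρ₁ (maxCorr q) := by
  have hρ₂0 : 0 ≤ maxCorr q := maxCorr_nonneg q hq0
  have ha0 : 0 ≤ ∑ x, ∑ y, q x y * m x ^ 2 :=
    Finset.sum_nonneg fun x _ => Finset.sum_nonneg fun y _ =>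
      mul_nonneg (hq0 x y) (sq_nonneg _)
  have hb0 : 0 ≤ ∑ x, ∑ y, q x y * n y ^ 2 :=
    Finset.sum_nonneg fun x _ => Finset.sum_nonneg fun y _ =>
      mul_nonneg (hq0 x y) (sq_nonneg _)
  have e7 : ∀ (x : X₂) (y : Y₂), q x y * Real.sqrt (T x - m x ^ 2) ^ 2
      = q x y * T x - q x y * m x ^ 2 := by
    intro x y
    rw [Real.sq_sqrt (hTm x)]
    ring
  have e8 : ∀ (x : X₂) (y : Y₂), q x y * Real.sqrt (U y - n y ^ 2) ^ 2
      = q x y * U y - q x y * n y ^ 2 := by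
    intro x y
    rw [Real.sq_sqrt (hUn y)]
    ring
  have ha1 : ∑ x, ∑ y, q x y * Real.sqrt (T x - m x ^ 2) ^ 2
      = 1 - ∑ x, ∑ y, q x y * m x ^ 2 := by
    simp only [e7, Finset.sum_sub_distrib, hT]
  have hb1 : ∑ x, ∑ y, q x y * Real.sqrt (U y - n y ^ 2) ^ 2
      = 1 - ∑ x, ∑ y, q x y * n y ^ 2 := by
    simp only [e8, Finset.sum_sub_distrib, hU]
  have h1a0 : 0 ≤ 1 - ∑ x, ∑ y, q x y * m x ^ 2 := by
    rw [← ha1]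
    exact Finset.sum_nonneg fun x _ => Finset.sum_nonneg fun y _ =>
      mul_nonneg (hq0 x y) (sq_nonneg _)
  have h1b0 : 0 ≤ 1 - ∑ x, ∑ y, q x y * n y ^ 2 := by
    rw [← hb1]
    exact Finset.sum_nonneg fun x _ => Finset.sum_nonneg fun y _ =>
      mul_nonneg (hq0 x y) (sq_nonneg _)
  have eS : ∑ x, ∑ y, q x y * (Real.sqrt (T x - m x ^ 2) * Real.sqrt (U y - n y ^ 2))
      = ∑ x, ∑ y, q x y * Real.sqrt (T x - m x ^ 2) * Real.sqrt (U y - n y ^ 2) :=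
    Finset.sum_congr rfl fun _ _ => Finset.sum_congr rfl fun _ _ => by ring
  have hS0 : 0 ≤ ∑ x, ∑ y, q x y * Real.sqrt (T x - m x ^ 2) * Real.sqrt (U y - n y ^ 2) := by
    rw [← eS]
    exact Finset.sum_nonneg fun x _ => Finset.sum_nonneg fun y _ =>
      mul_nonneg (hq0 x y) (mul_nonneg (Real.sqrt_nonneg _) (Real.sqrt_nonneg _))
  have hS2 := wCS2 q hq0 (fun x => Real.sqrt (T x - m x ^ 2)) (fun y => Real.sqrt (U y - n y ^ 2))
  rw [ha1, hb1] at hS2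
  have hSb : ∑ x, ∑ y, q x y * Real.sqrt (T x - m x ^ 2) * Real.sqrt (U y - n y ^ 2)
      ≤ Real.sqrt (1 - ∑ x, ∑ y, q x y * m x ^ 2)
        * Real.sqrt (1 - ∑ x, ∑ y, q x y * n y ^ 2) := by
    have h2 := (Real.le_sqrt hS0 (mul_nonneg h1a0 h1b0)).mpr hS2
    rwa [Real.sqrt_mul h1a0] at h2
  have A1 := key q hq0 m n hm hn
  have g1 : Real.sqrt (∑ x, ∑ y, q x y * m x ^ 2) * Real.sqrt (∑ x, ∑ y, q x y * n y ^ 2)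
      ≤ ((∑ x, ∑ y, q x y * m x ^ 2) + (∑ x, ∑ y, q x y * n y ^ 2)) / 2 := by
    nlinarith [sq_nonneg (Real.sqrt (∑ x, ∑ y, q x y * m x ^ 2)
        - Real.sqrt (∑ x, ∑ y, q x y * n y ^ 2)),
      Real.sq_sqrt ha0, Real.sq_sqrt hb0]
  have g2 : Real.sqrt (1 - ∑ x, ∑ y, q x y * m x ^ 2)
        * Real.sqrt (1 - ∑ x, ∑ y, q x y * n y ^ 2)
      ≤ ((1 - ∑ x, ∑ y, q x y * m x ^ 2) + (1 - ∑ x, ∑ y, q x y * n y ^ 2)) / 2 := by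
    nlinarith [sq_nonneg (Real.sqrt (1 - ∑ x, ∑ y, q x y * m x ^ 2)
        - Real.sqrt (1 - ∑ x, ∑ y, q x y * n y ^ 2)),
      Real.sq_sqrt h1a0, Real.sq_sqrt h1b0]
  have u1 : 0 ≤ Real.sqrt (∑ x, ∑ y, q x y * m x ^ 2)
      * Real.sqrt (∑ x, ∑ y, q x y * n y ^ 2) :=
    mul_nonneg (Real.sqrt_nonneg _) (Real.sqrt_nonneg _)
  have u2 : 0 ≤ Real.sqrt (1 - ∑ x, ∑ y, q x y * m x ^ 2)
      * Real.sqrt (1 - ∑ x, ∑ y, q x y * n y ^ 2) :=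
    mul_nonneg (Real.sqrt_nonneg _) (Real.sqrt_nonneg _)
  have hM0 : 0 ≤ max ρ₁ (maxCorr q) := le_trans hρ₁ (le_max_left _ _)
  have e6 : ∀ (x : X₂) (y : Y₂), q x y *
        (m x * n y + ρ₁ * (Real.sqrt (T x - m x ^ 2) * Real.sqrt (U y - n y ^ 2)))
      = q x y * (m x * n y)
        + ρ₁ * (q x y * (Real.sqrt (T x - m x ^ 2) * Real.sqrt (U y - n y ^ 2))) :=
    fun x y => by ring
  have eT : ∑ x, ∑ y, q x y * (m x * n y) = ∑ x, ∑ y, q x y * m x * n y :=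
    Finset.sum_congr rfl fun _ _ => Finset.sum_congr rfl fun _ _ => by ring
  have esplit : ∑ x, ∑ y, q x y *
        (m x * n y + ρ₁ * (Real.sqrt (T x - m x ^ 2) * Real.sqrt (U y - n y ^ 2)))
      = (∑ x, ∑ y, q x y * (m x * n y))
        + ρ₁ * ∑ x, ∑ y, q x y *
            (Real.sqrt (T x - m x ^ 2) * Real.sqrt (U y - n y ^ 2)) := by
    simp only [e6, Finset.sum_add_distrib, ← Finset.mul_sum]
  rw [esplit, eT, eS]
  have B1 : ρ₁ * (∑ x, ∑ y, q x y * Real.sqrt (T x - m x ^ 2) * Real.sqrt (U y - n y ^ 2))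
      ≤ ρ₁ * (Real.sqrt (1 - ∑ x, ∑ y, q x y * m x ^ 2)
          * Real.sqrt (1 - ∑ x, ∑ y, q x y * n y ^ 2)) :=
    mul_le_mul_of_nonneg_left hSb hρ₁
  have B2 : maxCorr q * (Real.sqrt (∑ x, ∑ y, q x y * m x ^ 2)
        * Real.sqrt (∑ x, ∑ y, q x y * n y ^ 2))
      ≤ max ρ₁ (maxCorr q) * (Real.sqrt (∑ x, ∑ y, q x y * m x ^ 2)
        * Real.sqrt (∑ x, ∑ y, q x y * n y ^ 2)) :=
    mul_le_mul_of_nonneg_right (le_max_right _ _) u1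
  have B3 : ρ₁ * (Real.sqrt (1 - ∑ x, ∑ y, q x y * m x ^ 2)
        * Real.sqrt (1 - ∑ x, ∑ y, q x y * n y ^ 2))
      ≤ max ρ₁ (maxCorr q) * (Real.sqrt (1 - ∑ x, ∑ y, q x y * m x ^ 2)
        * Real.sqrt (1 - ∑ x, ∑ y, q x y * n y ^ 2)) :=
    mul_le_mul_of_nonneg_right (le_max_left _ _) u2
  have B4 : Real.sqrt (∑ x, ∑ y, q x y * m x ^ 2) * Real.sqrt (∑ x, ∑ y, q x y * n y ^ 2)
      + Real.sqrt (1 - ∑ x, ∑ y, q x y * m x ^ 2)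
        * Real.sqrt (1 - ∑ x, ∑ y, q x y * n y ^ 2) ≤ 1 := by linarith
  nlinarith [A1, B1, B2, B3, B4, hM0, u1, u2]

end


/-- tensorization of maximal correlation (Witsenhausen). If `(X₁,Y₁)` and
`(X₂,Y₂)` are independent pairs, then
`ρ_m((X₁,X₂);(Y₁,Y₂)) = max {ρ_m(X₁;Y₁), ρ_m(X₂;Y₂)}`. -/
theorem maxCorr_tensorization {X₁ Y₁ X₂ Y₂ : Type*}
    [Fintype X₁] [Fintype Y₁] [Fintype X₂] [Fintype Y₂]
    (p : X₁ → Y₁ → ℝ) (q : X₂ → Y₂ → ℝ)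
    (hp : IsJointPMF p) (hq : IsJointPMF q) :
    maxCorr (fun (a : X₁ × X₂) (b : Y₁ × Y₂) => p a.1 b.1 * q a.2 b.2)
      = max (maxCorr p) (maxCorr q) := by
  have hP : ∀ (a : X₁ × X₂) (b : Y₁ × Y₂), 0 ≤ p a.1 b.1 * q a.2 b.2 :=
    fun a b => mul_nonneg (hp.1 _ _) (hq.1 _ _)
  apply le_antisymm
  · -- hard direction
    rw [maxCorr_eq]
    apply Real.sSup_le _ (le_trans (maxCorr_nonneg p hp.1) (le_max_left _ _))
    intro c hc
    obtain ⟨F, G, h1, h2, h3, h4, h5⟩ := hc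
    simp only at h1 h2 h3 h4 h5
    -- split the four constraints
    have s1 := sum_split p q (fun x₁ x₂ y₁ y₂ => F (x₁, x₂))
    simp only [Prod.mk.eta] at s1
    rw [s1] at h1
    have s2 := sum_split p q (fun x₁ x₂ y₁ y₂ => G (y₁, y₂))
    simp only [Prod.mk.eta] at s2
    rw [s2] at h2
    have s3 := sum_split p q (fun x₁ x₂ y₁ y₂ => (F (x₁, x₂))^2)
    simp only [Prod.mk.eta] at s3
    rw [s3] at h3
    have s4 := sum_split p q (fun x₁ x₂ y₁ y₂ => (G (y₁, y₂))^2)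
    simp only [Prod.mk.eta] at s4
    rw [s4] at h4
    -- nonnegativity of conditional variances
    have Tnn : ∀ x₂, 0 ≤ (∑ x₁, ∑ y₁, p x₁ y₁ * (F (x₁, x₂))^2)
        - (∑ x₁, ∑ y₁, p x₁ y₁ * F (x₁, x₂))^2 := by
      intro x₂
      have h := centered_sq p hp.2 (fun x₁ => F (x₁, x₂))
        (∑ x₁, ∑ y₁, p x₁ y₁ * F (x₁, x₂)) rfl
      rw [← h]
      exact Finset.sum_nonneg fun x _ => Finset.sum_nonneg fun y _ =>
        mul_nonneg (hp.1 x y) (sq_nonneg _)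
    have Unn : ∀ y₂, 0 ≤ (∑ x₁, ∑ y₁, p x₁ y₁ * (G (y₁, y₂))^2)
        - (∑ x₁, ∑ y₁, p x₁ y₁ * G (y₁, y₂))^2 := by
      intro y₂
      have h := centered_sq' p hp.2 (fun y₁ => G (y₁, y₂))
        (∑ x₁, ∑ y₁, p x₁ y₁ * G (y₁, y₂)) rfl
      rw [← h]
      exact Finset.sum_nonneg fun x _ => Finset.sum_nonneg fun y _ =>
        mul_nonneg (hp.1 x y) (sq_nonneg _)
    -- pointwise conditional bound
    have point : ∀ x₂ y₂,
        (∑ x₁, ∑ y₁, p x₁ y₁ * (F (x₁, x₂) * G (y₁, y₂)))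
          ≤ (∑ x₁, ∑ y₁, p x₁ y₁ * F (x₁, x₂)) * (∑ x₁, ∑ y₁, p x₁ y₁ * G (y₁, y₂))
            + maxCorr p *
              (Real.sqrt ((∑ x₁, ∑ y₁, p x₁ y₁ * (F (x₁, x₂))^2)
                  - (∑ x₁, ∑ y₁, p x₁ y₁ * F (x₁, x₂))^2)
               * Real.sqrt ((∑ x₁, ∑ y₁, p x₁ y₁ * (G (y₁, y₂))^2)
                  - (∑ x₁, ∑ y₁, p x₁ y₁ * G (y₁, y₂))^2)) := by
      intro x₂ y₂
      have hcm := centered_mean p hp.2 (fun x₁ => F (x₁, x₂))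
        (∑ x₁, ∑ y₁, p x₁ y₁ * F (x₁, x₂)) rfl
      have hcn := centered_mean' p hp.2 (fun y₁ => G (y₁, y₂))
        (∑ x₁, ∑ y₁, p x₁ y₁ * G (y₁, y₂)) rfl
      have hkey := key p hp.1 _ _ hcm hcn
      have ecr := centered_cross p hp.2 (fun x₁ => F (x₁, x₂)) (fun y₁ => G (y₁, y₂))
        (∑ x₁, ∑ y₁, p x₁ y₁ * F (x₁, x₂)) (∑ x₁, ∑ y₁, p x₁ y₁ * G (y₁, y₂)) rfl rfl
      have esq := centered_sq p hp.2 (fun x₁ => F (x₁, x₂))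
        (∑ x₁, ∑ y₁, p x₁ y₁ * F (x₁, x₂)) rfl
      have esq' := centered_sq' p hp.2 (fun y₁ => G (y₁, y₂))
        (∑ x₁, ∑ y₁, p x₁ y₁ * G (y₁, y₂)) rfl
      rw [ecr, esq, esq'] at hkey
      have e : (∑ x₁, ∑ y₁, p x₁ y₁ * (F (x₁, x₂) * G (y₁, y₂)))
          = ∑ x₁, ∑ y₁, p x₁ y₁ * F (x₁, x₂) * G (y₁, y₂) :=
        Finset.sum_congr rfl fun _ _ => Finset.sum_congr rfl fun _ _ => by ring
      rw [e]
      linarith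
    -- rewrite c
    have split_c := sum_split p q (fun x₁ x₂ y₁ y₂ => F (x₁, x₂) * G (y₁, y₂))
    simp only [Prod.mk.eta] at split_c
    have e5 : ∑ (a : X₁ × X₂), ∑ (b : Y₁ × Y₂), p a.1 b.1 * q a.2 b.2 * F a * G b
        = ∑ a : X₁ × X₂, ∑ b : Y₁ × Y₂, p a.1 b.1 * q a.2 b.2 * (F a * G b) :=
      Finset.sum_congr rfl fun a _ => Finset.sum_congr rfl fun b _ => by ring
    rw [h5, e5, split_c]
    -- step 1 : conditional bound summed against q
    have step1 : (∑ x₂, ∑ y₂, q x₂ y₂ * ∑ x₁, ∑ y₁, p x₁ y₁ * (F (x₁, x₂) * G (y₁, y₂)))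
        ≤ ∑ x₂, ∑ y₂, q x₂ y₂ *
            ((∑ x₁, ∑ y₁, p x₁ y₁ * F (x₁, x₂)) * (∑ x₁, ∑ y₁, p x₁ y₁ * G (y₁, y₂))
              + maxCorr p *
                (Real.sqrt ((∑ x₁, ∑ y₁, p x₁ y₁ * (F (x₁, x₂))^2)
                    - (∑ x₁, ∑ y₁, p x₁ y₁ * F (x₁, x₂))^2)
                 * Real.sqrt ((∑ x₁, ∑ y₁, p x₁ y₁ * (G (y₁, y₂))^2)
                    - (∑ x₁, ∑ y₁, p x₁ y₁ * G (y₁, y₂))^2))) :=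
      Finset.sum_le_sum fun x₂ _ => Finset.sum_le_sum fun y₂ _ =>
        mul_le_mul_of_nonneg_left (point x₂ y₂) (hq.1 x₂ y₂)
    refine le_trans step1 (final_step q hq.1
      (fun x₂ => ∑ x₁, ∑ y₁, p x₁ y₁ * F (x₁, x₂))
      (fun y₂ => ∑ x₁, ∑ y₁, p x₁ y₁ * G (y₁, y₂))
      (fun x₂ => ∑ x₁, ∑ y₁, p x₁ y₁ * (F (x₁, x₂))^2)
      (fun y₂ => ∑ x₁, ∑ y₁, p x₁ y₁ * (G (y₁, y₂))^2)
      (maxCorr p) (maxCorr_nonneg p hp.1) h1 h2 h3 h4 Tnn Unn)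
  · -- easy direction
    apply max_le
    · rw [maxCorr_eq p]
      apply Real.sSup_le _ (maxCorr_nonneg _ hP)
      intro c hc
      obtain ⟨f, g, hf1, hg1, hf2, hg2, hc5⟩ := hc
      have hmem : c ∈ corrSet (fun (a : X₁ × X₂) (b : Y₁ × Y₂) => p a.1 b.1 * q a.2 b.2) := by
        refine ⟨fun a => f a.1, fun b => g b.1, ?_, ?_, ?_, ?_, ?_⟩
        · show (∑ a : X₁ × X₂, ∑ b : Y₁ × Y₂, p a.1 b.1 * q a.2 b.2 * f a.1) = 0
          rw [sum_split p q (fun x₁ _ y₁ _ => f x₁), hf1]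
          simp
        · show (∑ a : X₁ × X₂, ∑ b : Y₁ × Y₂, p a.1 b.1 * q a.2 b.2 * g b.1) = 0
          rw [sum_split p q (fun x₁ _ y₁ _ => g y₁), hg1]
          simp
        · show (∑ a : X₁ × X₂, ∑ b : Y₁ × Y₂, p a.1 b.1 * q a.2 b.2 * (f a.1)^2) = 1
          rw [sum_split p q (fun x₁ _ y₁ _ => (f x₁)^2), hf2]
          simp only [mul_one, hq.2]
        · show (∑ a : X₁ × X₂, ∑ b : Y₁ × Y₂, p a.1 b.1 * q a.2 b.2 * (g b.1)^2) = 1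
          rw [sum_split p q (fun x₁ _ y₁ _ => (g y₁)^2), hg2]
          simp only [mul_one, hq.2]
        · show c = ∑ a : X₁ × X₂, ∑ b : Y₁ × Y₂, p a.1 b.1 * q a.2 b.2 * f a.1 * g b.1
          have e : ∑ (a : X₁ × X₂), ∑ (b : Y₁ × Y₂), p a.1 b.1 * q a.2 b.2 * f a.1 * g b.1
              = ∑ a : X₁ × X₂, ∑ b : Y₁ × Y₂, p a.1 b.1 * q a.2 b.2 * (f a.1 * g b.1) :=
            Finset.sum_congr rfl fun a _ => Finset.sum_congr rfl fun b _ => by ring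
          rw [e, sum_split p q (fun x₁ _ y₁ _ => f x₁ * g y₁)]
          have e2 : ∀ x₂ y₂ : ℕ, True := fun _ _ => trivial
          have e3 : ∀ x₁ y₁, p x₁ y₁ * (f x₁ * g y₁) = p x₁ y₁ * f x₁ * g y₁ :=
            fun _ _ => by ring
          simp only [e3, ← hc5]
          rw [const_out q c, hq.2, one_mul]
      exact le_csSup (corrSet_bddAbove _ hP) hmem
    · rw [maxCorr_eq q]
      apply Real.sSup_le _ (maxCorr_nonneg _ hP)
      intro c hc
      obtain ⟨f, g, hf1, hg1, hf2, hg2, hc5⟩ := hc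
      have hmem : c ∈ corrSet (fun (a : X₁ × X₂) (b : Y₁ × Y₂) => p a.1 b.1 * q a.2 b.2) := by
        refine ⟨fun a => f a.2, fun b => g b.2, ?_, ?_, ?_, ?_, ?_⟩
        · show (∑ a : X₁ × X₂, ∑ b : Y₁ × Y₂, p a.1 b.1 * q a.2 b.2 * f a.2) = 0
          rw [sum_split p q (fun _ x₂ _ _ => f x₂)]
          simp only [const_out p, hp.2, one_mul]
          exact hf1
        · show (∑ a : X₁ × X₂, ∑ b : Y₁ × Y₂, p a.1 b.1 * q a.2 b.2 * g b.2) = 0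
          rw [sum_split p q (fun _ _ _ y₂ => g y₂)]
          simp only [const_out p, hp.2, one_mul]
          exact hg1
        · show (∑ a : X₁ × X₂, ∑ b : Y₁ × Y₂, p a.1 b.1 * q a.2 b.2 * (f a.2)^2) = 1
          rw [sum_split p q (fun _ x₂ _ _ => (f x₂)^2)]
          simp only [const_out p, hp.2, one_mul]
          exact hf2
        · show (∑ a : X₁ × X₂, ∑ b : Y₁ × Y₂, p a.1 b.1 * q a.2 b.2 * (g b.2)^2) = 1
          rw [sum_split p q (fun _ _ _ y₂ => (g y₂)^2)]
          simp only [const_out p, hp.2, one_mul]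
          exact hg2
        · show c = ∑ a : X₁ × X₂, ∑ b : Y₁ × Y₂, p a.1 b.1 * q a.2 b.2 * f a.2 * g b.2
          have e : ∑ (a : X₁ × X₂), ∑ (b : Y₁ × Y₂), p a.1 b.1 * q a.2 b.2 * f a.2 * g b.2
              = ∑ a : X₁ × X₂, ∑ b : Y₁ × Y₂, p a.1 b.1 * q a.2 b.2 * (f a.2 * g b.2) :=
            Finset.sum_congr rfl fun a _ => Finset.sum_congr rfl fun b _ => by ring
          rw [e, sum_split p q (fun _ x₂ _ y₂ => f x₂ * g y₂)]
          simp only [const_out p, hp.2, one_mul]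
          have e3 : ∀ x₂ y₂, q x₂ y₂ * (f x₂ * g y₂) = q x₂ y₂ * f x₂ * g y₂ :=
            fun _ _ => by ring
          simp only [e3]
          exact hc5
      exact le_csSup (corrSet_bddAbove _ hP) hmem
end

section
/- For independent pairs (X₁,Y₁) ∼ p₁ and (X₂,Y₂) ∼ p₂ of finite-valued random variables, s*((X₁,X₂);(Y₁,Y₂)) = max{s*(X₁;Y₁), s*(X₂;Y₂)}, where the joint channel is p(y₁,y₂|x₁,x₂) = p₁(y₁|x₁)p₂(y₂|x₂) and the input distribution is p₁(x₁)p₂(x₂). -/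
open scoped BigOperators

/-!
Lower bound: the input `ρ ⊗ p₂` has the same input and output divergences as `ρ`, and similarly
on the second factor. Upper bound: the chain rule splits the input and output divergences of a
joint input `r` along the first coordinate. The first-coordinate terms are compared through `W₁`,
with ratio at most `s*(X₁;Y₁)`. Given `Y₁ = y₁`, the second channel sees a mixture over `x₁` of the
conditional laws `r(·|x₁)`, so by convexity of `KL` the conditional output divergence is at most
`s*(X₂;Y₂)` times the average conditional input divergence.
-/

open Real InformationTheory

lemma mul_log_div_mul_left (a b c : ℝ) :
    c * a * log (c * a / (c * b)) = c * (a * log (a / b)) := by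
  rcases eq_or_ne c 0 with rfl | hc
  · simp
  · rw [mul_div_mul_left _ _ hc, mul_assoc]

lemma mul_klFun_div {a c : ℝ} (hc : c ≠ 0) :
    c * klFun (a / c) = a * log (a / c) + c - a := by
  rw [klFun_apply]
  field_simp

lemma sub_le_mul_log_div {a c : ℝ} (ha : 0 ≤ a) (hc : 0 < c) : a - c ≤ a * log (a / c) := by
  have := mul_nonneg hc.le (klFun_nonneg (div_nonneg ha hc.le))
  rw [mul_klFun_div hc.ne'] at this
  linarith

lemma sub_lt_mul_log_div {a c : ℝ} (ha : 0 ≤ a) (hc : 0 < c) (hne : a ≠ c) :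
    a - c < a * log (a / c) := by
  have hpos : 0 < klFun (a / c) := by
    refine (klFun_nonneg (div_nonneg ha hc.le)).lt_of_ne' fun h => hne ?_
    rwa [klFun_eq_zero_iff (div_nonneg ha hc.le), div_eq_one_iff_eq hc.ne'] at h
  have := mul_pos hc hpos
  rw [mul_klFun_div hc.ne'] at this
  linarith

/-- Gibbs' inequality `a - b t ≤ a log (a / (b t))`, in the shape the log-sum inequality needs. -/
lemma mul_log_add_sub_le_mul_log_div {a b t : ℝ} (ha : 0 ≤ a) (hb : 0 ≤ b) (hab : b = 0 → a = 0)
    (ht : 0 < t) : a * log t + a - b * t ≤ a * log (a / b) := by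
  rcases ha.eq_or_lt with rfl | ha
  · simp only [zero_mul, zero_add, zero_sub, neg_nonpos]
    positivity
  have hb : 0 < b := hb.lt_of_ne' fun h => ha.ne' (hab h)
  have hsplit : log (a / b) = log t + log (a / (b * t)) := by
    rw [← log_mul ht.ne' (by positivity)]
    congr 1
    field_simp
  have := sub_le_mul_log_div ha.le (mul_pos hb ht)
  rw [hsplit]
  linarith

theorem log_sum_le {ι : Type*} (s : Finset ι) (a b : ι → ℝ) (ha : ∀ i ∈ s, 0 ≤ a i)
    (hb : ∀ i ∈ s, 0 ≤ b i) (hab : ∀ i ∈ s, b i = 0 → a i = 0) :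
    (∑ i ∈ s, a i) * log ((∑ i ∈ s, a i) / ∑ i ∈ s, b i) ≤ ∑ i ∈ s, a i * log (a i / b i) := by
  set A := ∑ i ∈ s, a i
  set B := ∑ i ∈ s, b i
  rcases (Finset.sum_nonneg ha).eq_or_lt with hA | hA
  · have ha0 := (Finset.sum_eq_zero_iff_of_nonneg ha).1 hA.symm
    rw [show A = 0 from hA.symm, zero_mul]
    exact (Finset.sum_eq_zero fun i hi => by rw [ha0 i hi, zero_mul]).ge
  have hB : 0 < B := by
    refine (Finset.sum_nonneg hb).lt_of_ne' fun hB => hA.ne' ?_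
    have hb0 := (Finset.sum_eq_zero_iff_of_nonneg hb).1 hB
    exact Finset.sum_eq_zero fun i hi => hab i hi (hb0 i hi)
  calc A * log (A / B) = ∑ i ∈ s, (a i * log (A / B) + a i - b i * (A / B)) := by
        rw [Finset.sum_sub_distrib, Finset.sum_add_distrib, ← Finset.sum_mul, ← Finset.sum_mul]
        field_simp
        ring
    _ ≤ ∑ i ∈ s, a i * log (a i / b i) := Finset.sum_le_sum fun i hi =>
        mul_log_add_sub_le_mul_log_div (ha i hi) (hb i hi) (hab i hi) (div_pos hA hB)

section KL

variable {X : Type*} [Fintype X]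

@[simp]
lemma KL_self (a : X → ℝ) : KL a a = 0 := by
  simp [KL]

lemma KL_smul (c : ℝ) (a b : X → ℝ) : KL (c • a) (c • b) = c * KL a b := by
  simp only [KL, Pi.smul_apply, smul_eq_mul, mul_log_div_mul_left, Finset.mul_sum]

lemma KL_sum_le {ι : Type*} (s : Finset ι) (a b : ι → X → ℝ) (ha : ∀ i ∈ s, ∀ x, 0 ≤ a i x)
    (hb : ∀ i ∈ s, ∀ x, 0 ≤ b i x) (hab : ∀ i ∈ s, ∀ x, b i x = 0 → a i x = 0) :
    KL (∑ i ∈ s, a i) (∑ i ∈ s, b i) ≤ ∑ i ∈ s, KL (a i) (b i) := by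
  simp only [KL, Finset.sum_apply]
  rw [Finset.sum_comm]
  exact Finset.sum_le_sum fun x _ =>
    log_sum_le s _ _ (fun i hi => ha i hi x) (fun i hi => hb i hi x) fun i hi => hab i hi x

lemma KL_nonneg {a b : X → ℝ} (ha : ∀ x, 0 ≤ a x) (hb : ∀ x, 0 ≤ b x)
    (hab : ∀ x, b x = 0 → a x = 0) (hsum : ∑ x, a x = ∑ x, b x) : 0 ≤ KL a b := by
  have := log_sum_le Finset.univ a b (fun x _ => ha x) (fun x _ => hb x) fun x _ => hab x
  rwa [hsum, log_div_self, mul_zero] at this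

lemma KL_pos {a b : X → ℝ} (ha : ∀ x, 0 ≤ a x) (hb : ∀ x, 0 < b x)
    (hsum : ∑ x, a x = ∑ x, b x) (hne : a ≠ b) : 0 < KL a b := by
  obtain ⟨x₀, hx₀⟩ := Function.ne_iff.1 hne
  have hlt : ∑ x, (a x - b x) < KL a b :=
    Finset.sum_lt_sum (fun x _ => sub_le_mul_log_div (ha x) (hb x))
      ⟨x₀, Finset.mem_univ _, sub_lt_mul_log_div (ha x₀) (hb x₀) hx₀⟩
  rwa [Finset.sum_sub_distrib, hsum, sub_self] at hlt

lemma eq_zero_of_sum_smul_apply_eq_zero {a p : X → ℝ} (ha : ∀ x, 0 ≤ a x) (hp : ∀ x, 0 < p x)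
    {x : X} (h : ((∑ x, a x) • p) x = 0) : a x = 0 := by
  rcases mul_eq_zero.1 h with h | h
  · exact (Finset.sum_eq_zero_iff_of_nonneg fun x _ => ha x).1 h x (Finset.mem_univ _)
  · exact absurd h (hp x).ne'

lemma KL_smul_smul (a b : ℝ) (w : X → ℝ) :
    KL (a • w) (b • w) = (∑ x, w x) * (a * log (a / b)) := by
  simp only [KL, Pi.smul_apply, smul_eq_mul, Finset.sum_mul]
  refine Finset.sum_congr rfl fun x _ => ?_
  rw [mul_comm a, mul_comm b, mul_log_div_mul_left]

lemma KL_sum_smul_le {ι : Type*} (s : Finset ι) {w : ι → ℝ}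
    (hw : ∀ i ∈ s, 0 ≤ w i) {a b : ι → X → ℝ} (ha : ∀ i ∈ s, ∀ x, 0 ≤ a i x)
    (hb : ∀ i ∈ s, ∀ x, 0 ≤ b i x) (hab : ∀ i ∈ s, ∀ x, b i x = 0 → a i x = 0) :
    KL (∑ i ∈ s, w i • a i) (∑ i ∈ s, w i • b i) ≤ ∑ i ∈ s, w i * KL (a i) (b i) := by
  refine (KL_sum_le s _ _ (fun i hi x => mul_nonneg (hw i hi) (ha i hi x))
    (fun i hi x => mul_nonneg (hw i hi) (hb i hi x)) fun i hi x h => ?_).trans_eq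
    (Finset.sum_congr rfl fun i _ => KL_smul _ _ _)
  rcases mul_eq_zero.1 h with h | h
  · simp [h]
  · simp [hab i hi x h]

end KL

section Channel

variable {X Y : Type*} [Fintype X]

/-- The output distribution `r(y) = ∑ₓ r(x) W(y|x)` of the channel `W` on the input `r`. -/
def outputDist (W : X → Y → ℝ) (r : X → ℝ) : Y → ℝ := fun y => ∑ x, r x * W x y

lemma outputDist_eq_sum (W : X → Y → ℝ) (r : X → ℝ) : outputDist W r = ∑ x, r x • W x := by
  ext y
  simp [outputDist, Finset.sum_apply]

lemma outputDist_smul (W : X → Y → ℝ) (c : ℝ) (r : X → ℝ) :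
    outputDist W (c • r) = c • outputDist W r := by
  ext y
  simp [outputDist, Finset.mul_sum, mul_assoc]

lemma sum_outputDist [Fintype Y] {W : X → Y → ℝ} (hW : ∀ x, ∑ y, W x y = 1) (r : X → ℝ) :
    ∑ y, outputDist W r y = ∑ x, r x := by
  simp only [outputDist]
  rw [Finset.sum_comm]
  simp [← Finset.mul_sum, hW]

lemma outputDist_nonneg {W : X → Y → ℝ} (hW : ∀ x y, 0 ≤ W x y) {r : X → ℝ}
    (hr : ∀ x, 0 ≤ r x) (y : Y) : 0 ≤ outputDist W r y :=
  Finset.sum_nonneg fun x _ => mul_nonneg (hr x) (hW x y)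

lemma outputDist_eq_zero {W : X → Y → ℝ} (hW : ∀ x y, 0 ≤ W x y) {r p : X → ℝ}
    (hp : ∀ x, 0 ≤ p x) (hrp : ∀ x, p x = 0 → r x = 0) {y : Y} (h : outputDist W p y = 0) :
    outputDist W r y = 0 := by
  have hzero := (Finset.sum_eq_zero_iff_of_nonneg fun x _ => mul_nonneg (hp x) (hW x y)).1 h
  refine Finset.sum_eq_zero fun x hx => ?_
  rcases mul_eq_zero.1 (hzero x hx) with h | h
  · rw [hrp x h, zero_mul]
  · rw [h, mul_zero]

theorem KL_outputDist_le [Fintype Y] {W : X → Y → ℝ} (hW : ∀ x, IsPMF (W x)) {r p : X → ℝ}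
    (hr : ∀ x, 0 ≤ r x) (hp : ∀ x, 0 ≤ p x) (hrp : ∀ x, p x = 0 → r x = 0) :
    KL (outputDist W r) (outputDist W p) ≤ KL r p := by
  rw [outputDist_eq_sum, outputDist_eq_sum]
  refine (KL_sum_le _ _ _ (fun x _ y => mul_nonneg (hr x) ((hW x).1 y))
    (fun x _ y => mul_nonneg (hp x) ((hW x).1 y)) fun x _ y h => ?_).trans_eq ?_
  · rcases mul_eq_zero.1 h with h | h
    · simp [hrp x h]
    · simp [h]
  · exact Finset.sum_congr rfl fun x _ =>
      (KL_smul_smul (r x) (p x) (W x)).trans (by rw [(hW x).2, one_mul])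

end Channel

section SStar

variable {X Y : Type*} [Fintype X] [Fintype Y] {p : X → ℝ} {W : X → Y → ℝ}

lemma IsPMF.KL_nonneg {r : X → ℝ} (hr : IsPMF r) (hp : IsPMF p) (hppos : ∀ x, 0 < p x) :
    0 ≤ KL r p :=
  _root_.KL_nonneg hr.1 hp.1 (fun x h => absurd h (hppos x).ne') (hr.2.trans hp.2.symm)

lemma IsPMF.KL_pos {r : X → ℝ} (hr : IsPMF r) (hp : IsPMF p) (hppos : ∀ x, 0 < p x)
    (hne : r ≠ p) : 0 < KL r p :=
  _root_.KL_pos hr.1 hppos (hr.2.trans hp.2.symm) hne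

lemma IsPMF.ne_zero (hp : IsPMF p) : p ≠ 0 := by
  rintro rfl
  simp [IsPMF] at hp

lemma div_KL_le_sStar (hp : IsPMF p) (hppos : ∀ x, 0 < p x) (hW : ∀ x, IsPMF (W x))
    {r : X → ℝ} (hr : IsPMF r) (hne : r ≠ p) :
    KL (outputDist W r) (outputDist W p) / KL r p ≤ sStar p W := by
  refine le_csSup ⟨1, ?_⟩ ⟨r, hr, hne, rfl⟩
  rintro _ ⟨ρ, hρ, -, rfl⟩
  exact div_le_one_of_le₀ (KL_outputDist_le hW hρ.1 hp.1 fun x h => absurd h (hppos x).ne')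
    (hρ.KL_nonneg hp hppos)

lemma sStar_le {M : ℝ} (hM : 0 ≤ M)
    (h : ∀ r, IsPMF r → r ≠ p → KL (outputDist W r) (outputDist W p) / KL r p ≤ M) :
    sStar p W ≤ M :=
  Real.sSup_le (by rintro _ ⟨r, hr, hne, rfl⟩; exact h r hr hne) hM

lemma sStar_nonneg (hp : IsPMF p) (hppos : ∀ x, 0 < p x) (hW : ∀ x, IsPMF (W x)) :
    0 ≤ sStar p W := by
  refine Real.sSup_nonneg ?_
  rintro _ ⟨r, hr, -, rfl⟩
  change 0 ≤ KL (outputDist W r) (outputDist W p) / KL r p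
  have hWnn : ∀ x y, 0 ≤ W x y := fun x => (hW x).1
  refine div_nonneg (KL_nonneg (outputDist_nonneg hWnn hr.1) (outputDist_nonneg hWnn hp.1)
    (fun y => outputDist_eq_zero hWnn hp.1 fun x h => absurd h (hppos x).ne') ?_)
    (hr.KL_nonneg hp hppos)
  rw [sum_outputDist (fun x => (hW x).2), sum_outputDist (fun x => (hW x).2), hr.2, hp.2]

lemma KL_outputDist_le_sStar_mul (hp : IsPMF p) (hppos : ∀ x, 0 < p x) (hW : ∀ x, IsPMF (W x))
    {r : X → ℝ} (hr : IsPMF r) :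
    KL (outputDist W r) (outputDist W p) ≤ sStar p W * KL r p := by
  rcases eq_or_ne r p with rfl | hne
  · simp
  · exact (div_le_iff₀ (hr.KL_pos hp hppos hne)).1 (div_KL_le_sStar hp hppos hW hr hne)

lemma KL_outputDist_le_sStar_mul_of_sum_eq (hp : IsPMF p) (hppos : ∀ x, 0 < p x)
    (hW : ∀ x, IsPMF (W x)) {ν : X → ℝ} (hν : ∀ x, 0 ≤ ν x) {c : ℝ} (hc : ∑ x, ν x = c) :
    KL (outputDist W ν) (c • outputDist W p) ≤ sStar p W * KL ν (c • p) := by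
  rcases eq_or_ne c 0 with rfl | hc0
  · simp [KL]
  have hcpos : 0 < c := (hc ▸ Finset.sum_nonneg fun x _ => hν x).lt_of_ne' hc0
  have hpmf : IsPMF (c⁻¹ • ν) :=
    ⟨fun x => mul_nonneg (inv_nonneg.2 hcpos.le) (hν x), by
      simp [← Finset.mul_sum, hc, hc0]⟩
  have hν' : ν = c • c⁻¹ • ν := by rw [smul_smul, mul_inv_cancel₀ hc0, one_smul]
  rw [hν', outputDist_smul, KL_smul, KL_smul, mul_left_comm]
  exact mul_le_mul_of_nonneg_left (KL_outputDist_le_sStar_mul hp hppos hW hpmf) hcpos.le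

end SStar

section Product

variable {X₁ X₂ Y₁ Y₂ : Type*}

def prodDist (p₁ : X₁ → ℝ) (p₂ : X₂ → ℝ) : X₁ × X₂ → ℝ := fun a => p₁ a.1 * p₂ a.2

def prodChannel (W₁ : X₁ → Y₁ → ℝ) (W₂ : X₂ → Y₂ → ℝ) : X₁ × X₂ → Y₁ × Y₂ → ℝ :=
  fun a => prodDist (W₁ a.1) (W₂ a.2)

lemma prodDist_ne_prodDist_of_ne_left {r p₁ : X₁ → ℝ} {p₂ : X₂ → ℝ} (h : r ≠ p₁) (h₂ : p₂ ≠ 0) :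
    prodDist r p₂ ≠ prodDist p₁ p₂ := by
  obtain ⟨x₁, hx₁⟩ := Function.ne_iff.1 h
  obtain ⟨x₂, hx₂⟩ := Function.ne_iff.1 h₂
  exact fun heq => hx₁ (mul_right_cancel₀ hx₂ (congrFun heq (x₁, x₂)))

lemma prodDist_ne_prodDist_of_ne_right {p₁ : X₁ → ℝ} {r p₂ : X₂ → ℝ} (h₁ : p₁ ≠ 0) (h : r ≠ p₂) :
    prodDist p₁ r ≠ prodDist p₁ p₂ := by
  obtain ⟨x₁, hx₁⟩ := Function.ne_iff.1 h₁
  obtain ⟨x₂, hx₂⟩ := Function.ne_iff.1 h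
  exact fun heq => hx₂ (mul_left_cancel₀ hx₁ (congrFun heq (x₁, x₂)))

lemma prodDist_pos {p₁ : X₁ → ℝ} {p₂ : X₂ → ℝ} (h₁ : ∀ x, 0 < p₁ x) (h₂ : ∀ x, 0 < p₂ x)
    (a : X₁ × X₂) : 0 < prodDist p₁ p₂ a :=
  mul_pos (h₁ a.1) (h₂ a.2)

lemma sum_prodDist [Fintype X₁] [Fintype X₂] (p₁ : X₁ → ℝ) (p₂ : X₂ → ℝ) :
    ∑ a, prodDist p₁ p₂ a = (∑ x, p₁ x) * ∑ x, p₂ x := by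
  rw [Fintype.sum_mul_sum, Fintype.sum_prod_type]
  rfl

lemma IsPMF.prodDist [Fintype X₁] [Fintype X₂] {p₁ : X₁ → ℝ} {p₂ : X₂ → ℝ} (h₁ : IsPMF p₁)
    (h₂ : IsPMF p₂) : IsPMF (prodDist p₁ p₂) :=
  ⟨fun a => mul_nonneg (h₁.1 a.1) (h₂.1 a.2), by rw [sum_prodDist, h₁.2, h₂.2, one_mul]⟩

lemma isPMF_prodChannel {W₁ : X₁ → Y₁ → ℝ} {W₂ : X₂ → Y₂ → ℝ} [Fintype Y₁] [Fintype Y₂]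
    (hW₁ : ∀ x, IsPMF (W₁ x)) (hW₂ : ∀ x, IsPMF (W₂ x)) (a : X₁ × X₂) :
    IsPMF (prodChannel W₁ W₂ a) :=
  (hW₁ a.1).prodDist (hW₂ a.2)

variable [Fintype X₁] [Fintype X₂]

lemma IsPMF.sum_snd {r : X₁ × X₂ → ℝ} (hr : IsPMF r) : IsPMF fun x₁ => ∑ x₂, r (x₁, x₂) :=
  ⟨fun _ => Finset.sum_nonneg fun _ _ => hr.1 _, by rw [← Fintype.sum_prod_type, hr.2]⟩

lemma KL_prodDist_left (c : X₁ → ℝ) (a b : X₂ → ℝ) :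
    KL (prodDist c a) (prodDist c b) = (∑ x, c x) * KL a b := by
  simp only [KL, prodDist, Fintype.sum_prod_type, mul_log_div_mul_left, ← Finset.mul_sum,
    Finset.sum_mul]

lemma KL_prodDist_right (a b : X₁ → ℝ) (c : X₂ → ℝ) :
    KL (prodDist a c) (prodDist b c) = (∑ x, c x) * KL a b := by
  simp only [KL, prodDist, Fintype.sum_prod_type, mul_comm _ (c _), mul_log_div_mul_left]
  rw [Finset.sum_comm]
  simp only [← Finset.mul_sum, Finset.sum_mul]

lemma outputDist_prodDist (W₁ : X₁ → Y₁ → ℝ) (W₂ : X₂ → Y₂ → ℝ) (p₁ : X₁ → ℝ) (p₂ : X₂ → ℝ) :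
    outputDist (prodChannel W₁ W₂) (prodDist p₁ p₂)
      = prodDist (outputDist W₁ p₁) (outputDist W₂ p₂) := by
  ext y
  simp only [outputDist, prodChannel, prodDist, Fintype.sum_prod_type, Finset.sum_mul_sum]
  exact Finset.sum_congr rfl fun _ _ => Finset.sum_congr rfl fun _ _ => by ring

lemma outputDist_prodChannel_apply (W₁ : X₁ → Y₁ → ℝ) (W₂ : X₂ → Y₂ → ℝ) (r : X₁ × X₂ → ℝ)
    (y₁ : Y₁) (y₂ : Y₂) :
    outputDist (prodChannel W₁ W₂) r (y₁, y₂)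
      = outputDist W₂ (fun x₂ => outputDist W₁ (fun x₁ => r (x₁, x₂)) y₁) y₂ := by
  simp only [outputDist, prodChannel, prodDist, Fintype.sum_prod_type, Finset.sum_mul]
  rw [Finset.sum_comm]
  exact Finset.sum_congr rfl fun _ _ => Finset.sum_congr rfl fun _ _ => by ring

lemma sum_outputDist_prodChannel_snd [Fintype Y₂] (W₁ : X₁ → Y₁ → ℝ) {W₂ : X₂ → Y₂ → ℝ}
    (hW₂ : ∀ x, ∑ y, W₂ x y = 1) (r : X₁ × X₂ → ℝ) (y₁ : Y₁) :
    ∑ y₂, outputDist (prodChannel W₁ W₂) r (y₁, y₂)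
      = outputDist W₁ (fun x₁ => ∑ x₂, r (x₁, x₂)) y₁ := by
  simp only [outputDist_prodChannel_apply]
  rw [sum_outputDist hW₂]
  simp only [outputDist, Finset.sum_mul]
  exact Finset.sum_comm

theorem KL_chain_rule {f : X₁ × X₂ → ℝ} (hf : ∀ z, 0 ≤ f z) {g : X₁ → ℝ} {h : X₂ → ℝ}
    (hfgh : ∀ z, prodDist g h z = 0 → f z = 0) :
    KL f (prodDist g h)
      = KL (fun x₁ => ∑ x₂, f (x₁, x₂)) g
        + ∑ x₁, KL (fun x₂ => f (x₁, x₂)) ((∑ x₂, f (x₁, x₂)) • h) := by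
  simp only [KL, prodDist, Fintype.sum_prod_type, Pi.smul_apply, smul_eq_mul]
  rw [← Finset.sum_add_distrib]
  refine Finset.sum_congr rfl fun x₁ _ => ?_
  rw [Finset.sum_mul, ← Finset.sum_add_distrib]
  refine Finset.sum_congr rfl fun x₂ _ => ?_
  rcases (hf (x₁, x₂)).eq_or_lt with h0 | hpos
  · simp [← h0]
  have hgh : g x₁ * h x₂ ≠ 0 := fun h0 => hpos.ne' (hfgh _ h0)
  have hmarg : 0 < ∑ x₂, f (x₁, x₂) :=
    hpos.trans_le (Finset.single_le_sum (fun x _ => hf (x₁, x)) (Finset.mem_univ x₂))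
  rw [← mul_add, ← log_mul (div_ne_zero hmarg.ne' (left_ne_zero_of_mul hgh))
    (div_ne_zero hpos.ne' (mul_ne_zero hmarg.ne' (right_ne_zero_of_mul hgh)))]
  congr 2
  field_simp

end Product

section Tensorization

variable {X₁ Y₁ X₂ Y₂ : Type*} [Fintype X₁] [Fintype Y₁] [Fintype X₂] [Fintype Y₂]
  {p₁ : X₁ → ℝ} {W₁ : X₁ → Y₁ → ℝ} {p₂ : X₂ → ℝ} {W₂ : X₂ → Y₂ → ℝ}

/-- Conditionally on `Y₁ = y₁`, the input of the second channel is a mixture over `x₁` of the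
rows of `r`; convexity of `KL` then bounds the conditional output divergence. -/
lemma KL_outputDist_prodChannel_cond_le (hW₁ : ∀ x, IsPMF (W₁ x)) (hp₂ : IsPMF p₂)
    (hp₂pos : ∀ x, 0 < p₂ x) (hW₂ : ∀ x, IsPMF (W₂ x)) {r : X₁ × X₂ → ℝ} (hr : ∀ z, 0 ≤ r z)
    (y₁ : Y₁) :
    KL (fun y₂ => outputDist (prodChannel W₁ W₂) r (y₁, y₂))
        ((∑ y₂, outputDist (prodChannel W₁ W₂) r (y₁, y₂)) • outputDist W₂ p₂)
      ≤ sStar p₂ W₂ * ∑ x₁, W₁ x₁ y₁ * KL (fun x₂ => r (x₁, x₂)) ((∑ x₂, r (x₁, x₂)) • p₂) := by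
  set ν : X₂ → ℝ := fun x₂ => outputDist W₁ (fun x₁ => r (x₁, x₂)) y₁
  have hq : (fun y₂ => outputDist (prodChannel W₁ W₂) r (y₁, y₂)) = outputDist W₂ ν :=
    funext (outputDist_prodChannel_apply W₁ W₂ r y₁)
  have hν : ν = ∑ x₁, W₁ x₁ y₁ • fun x₂ => r (x₁, x₂) := by
    ext x₂
    simp [ν, outputDist, Finset.sum_apply, mul_comm]
  have hsum : (∑ x₂, ν x₂) • p₂ = ∑ x₁, W₁ x₁ y₁ • (∑ x₂, r (x₁, x₂)) • p₂ := by
    simp only [smul_smul, ← Finset.sum_smul, Finset.mul_sum]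
    congr 1
    simp only [ν, outputDist]
    rw [Finset.sum_comm]
    simp only [mul_comm]
  rw [hq, sum_outputDist fun x => (hW₂ x).2]
  refine (KL_outputDist_le_sStar_mul_of_sum_eq hp₂ hp₂pos hW₂ (ν := ν)
    (fun _ => outputDist_nonneg (fun x => (hW₁ x).1) (fun _ => hr _) y₁) rfl).trans
    (mul_le_mul_of_nonneg_left ?_ (sStar_nonneg hp₂ hp₂pos hW₂))
  rw [hsum, hν]
  refine KL_sum_smul_le _ (fun x₁ _ => (hW₁ x₁).1 y₁) (fun x₁ _ x₂ => hr _)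
    (fun x₁ _ x₂ => mul_nonneg (Finset.sum_nonneg fun _ _ => hr _) (hp₂pos x₂).le)
    fun x₁ _ x₂ => eq_zero_of_sum_smul_apply_eq_zero (fun _ => hr _) hp₂pos

lemma KL_outputDist_prodChannel_le_add (hp₁ : IsPMF p₁) (hp₁pos : ∀ x, 0 < p₁ x)
    (hW₁ : ∀ x, IsPMF (W₁ x)) (hp₂ : IsPMF p₂) (hp₂pos : ∀ x, 0 < p₂ x)
    (hW₂ : ∀ x, IsPMF (W₂ x)) {r : X₁ × X₂ → ℝ} (hr : IsPMF r) :
    KL (outputDist (prodChannel W₁ W₂) r) (outputDist (prodChannel W₁ W₂) (prodDist p₁ p₂))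
      ≤ sStar p₁ W₁ * KL (fun x₁ => ∑ x₂, r (x₁, x₂)) p₁
        + sStar p₂ W₂ * ∑ x₁, KL (fun x₂ => r (x₁, x₂)) ((∑ x₂, r (x₁, x₂)) • p₂) := by
  have hWnn : ∀ a b, 0 ≤ prodChannel W₁ W₂ a b := fun a => (isPMF_prodChannel hW₁ hW₂ a).1
  rw [outputDist_prodDist, KL_chain_rule (outputDist_nonneg hWnn hr.1) fun y h => ?_]
  · rw [show (fun y₁ => ∑ y₂, outputDist (prodChannel W₁ W₂) r (y₁, y₂))
        = outputDist W₁ fun x₁ => ∑ x₂, r (x₁, x₂) from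
      funext (sum_outputDist_prodChannel_snd W₁ (fun x => (hW₂ x).2) r)]
    refine add_le_add (KL_outputDist_le_sStar_mul hp₁ hp₁pos hW₁ hr.sum_snd) ?_
    calc _ ≤ ∑ y₁, sStar p₂ W₂ * ∑ x₁, W₁ x₁ y₁
              * KL (fun x₂ => r (x₁, x₂)) ((∑ x₂, r (x₁, x₂)) • p₂) :=
          Finset.sum_le_sum fun y₁ _ =>
            KL_outputDist_prodChannel_cond_le hW₁ hp₂ hp₂pos hW₂ hr.1 y₁
      _ = _ := by
          rw [← Finset.mul_sum, Finset.sum_comm]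
          simp only [← Finset.sum_mul, (hW₁ _).2, one_mul]
  · rw [← outputDist_prodDist] at h
    exact outputDist_eq_zero hWnn (hp₁.prodDist hp₂).1
      (fun a ha => absurd ha (prodDist_pos hp₁pos hp₂pos a).ne') h

theorem KL_outputDist_prodChannel_le_max (hp₁ : IsPMF p₁) (hp₁pos : ∀ x, 0 < p₁ x)
    (hW₁ : ∀ x, IsPMF (W₁ x)) (hp₂ : IsPMF p₂) (hp₂pos : ∀ x, 0 < p₂ x)
    (hW₂ : ∀ x, IsPMF (W₂ x)) {r : X₁ × X₂ → ℝ} (hr : IsPMF r) :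
    KL (outputDist (prodChannel W₁ W₂) r) (outputDist (prodChannel W₁ W₂) (prodDist p₁ p₂))
      ≤ max (sStar p₁ W₁) (sStar p₂ W₂) * KL r (prodDist p₁ p₂) := by
  have hmarg : 0 ≤ KL (fun x₁ => ∑ x₂, r (x₁, x₂)) p₁ := hr.sum_snd.KL_nonneg hp₁ hp₁pos
  have hcond : 0 ≤ ∑ x₁, KL (fun x₂ => r (x₁, x₂)) ((∑ x₂, r (x₁, x₂)) • p₂) :=
    Finset.sum_nonneg fun x₁ _ => KL_nonneg (fun _ => hr.1 _)
      (fun x₂ => mul_nonneg (Finset.sum_nonneg fun _ _ => hr.1 _) (hp₂pos x₂).le)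
      (fun _ => eq_zero_of_sum_smul_apply_eq_zero (fun _ => hr.1 _) hp₂pos)
      (by simp only [Pi.smul_apply, smul_eq_mul]; rw [← Finset.mul_sum, hp₂.2, mul_one])
  rw [KL_chain_rule hr.1 fun a ha => absurd ha (prodDist_pos hp₁pos hp₂pos a).ne', mul_add]
  exact (KL_outputDist_prodChannel_le_add hp₁ hp₁pos hW₁ hp₂ hp₂pos hW₂ hr).trans
    (add_le_add (mul_le_mul_of_nonneg_right (le_max_left _ _) hmarg)
      (mul_le_mul_of_nonneg_right (le_max_right _ _) hcond))

lemma sStar_le_sStar_prodChannel_left (hp₁ : IsPMF p₁) (hp₁pos : ∀ x, 0 < p₁ x)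
    (hW₁ : ∀ x, IsPMF (W₁ x)) (hp₂ : IsPMF p₂) (hp₂pos : ∀ x, 0 < p₂ x)
    (hW₂ : ∀ x, IsPMF (W₂ x)) :
    sStar p₁ W₁ ≤ sStar (prodDist p₁ p₂) (prodChannel W₁ W₂) := by
  have hp := hp₁.prodDist hp₂
  have hppos := prodDist_pos hp₁pos hp₂pos
  have hW := isPMF_prodChannel hW₁ hW₂
  refine sStar_le (sStar_nonneg hp hppos hW) fun ρ hρ hne => ?_
  have h := div_KL_le_sStar hp hppos hW (hρ.prodDist hp₂)
    (prodDist_ne_prodDist_of_ne_left hne hp₂.ne_zero)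
  rwa [outputDist_prodDist, outputDist_prodDist, KL_prodDist_right, KL_prodDist_right,
    sum_outputDist fun x => (hW₂ x).2, hp₂.2, one_mul, one_mul] at h

lemma sStar_le_sStar_prodChannel_right (hp₁ : IsPMF p₁) (hp₁pos : ∀ x, 0 < p₁ x)
    (hW₁ : ∀ x, IsPMF (W₁ x)) (hp₂ : IsPMF p₂) (hp₂pos : ∀ x, 0 < p₂ x)
    (hW₂ : ∀ x, IsPMF (W₂ x)) :
    sStar p₂ W₂ ≤ sStar (prodDist p₁ p₂) (prodChannel W₁ W₂) := by
  have hp := hp₁.prodDist hp₂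
  have hppos := prodDist_pos hp₁pos hp₂pos
  have hW := isPMF_prodChannel hW₁ hW₂
  refine sStar_le (sStar_nonneg hp hppos hW) fun ρ hρ hne => ?_
  have h := div_KL_le_sStar hp hppos hW (hp₁.prodDist hρ)
    (prodDist_ne_prodDist_of_ne_right hp₁.ne_zero hne)
  rwa [outputDist_prodDist, outputDist_prodDist, KL_prodDist_left, KL_prodDist_left,
    sum_outputDist fun x => (hW₁ x).2, hp₁.2, one_mul, one_mul] at h

end Tensorization

/-- tensorization of `s*`. For independent pairs `(X₁,Y₁) ∼ p₁(x)W₁(y|x)`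
and `(X₂,Y₂) ∼ p₂(x)W₂(y|x)`,
`s*((X₁,X₂);(Y₁,Y₂)) = max {s*(X₁;Y₁), s*(X₂;Y₂)}`. -/
theorem sStar_tensorization {X₁ Y₁ X₂ Y₂ : Type*}
    [Fintype X₁] [Fintype Y₁] [Fintype X₂] [Fintype Y₂]
    (p₁ : X₁ → ℝ) (W₁ : X₁ → Y₁ → ℝ) (p₂ : X₂ → ℝ) (W₂ : X₂ → Y₂ → ℝ)
    (hp₁ : IsPMF p₁) (hp₁pos : ∀ x, 0 < p₁ x) (hW₁ : ∀ x, IsPMF (W₁ x))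
    (hp₂ : IsPMF p₂) (hp₂pos : ∀ x, 0 < p₂ x) (hW₂ : ∀ x, IsPMF (W₂ x)) :
    sStar (fun a : X₁ × X₂ => p₁ a.1 * p₂ a.2)
        (fun (a : X₁ × X₂) (b : Y₁ × Y₂) => W₁ a.1 b.1 * W₂ a.2 b.2)
      = max (sStar p₁ W₁) (sStar p₂ W₂) := by
  change sStar (prodDist p₁ p₂) (prodChannel W₁ W₂) = _
  refine le_antisymm (sStar_le ?_ fun r hr hne => ?_) (max_le ?_ ?_)
  · exact (sStar_nonneg hp₁ hp₁pos hW₁).trans (le_max_left _ _)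
  · exact (div_le_iff₀ (hr.KL_pos (hp₁.prodDist hp₂) (prodDist_pos hp₁pos hp₂pos) hne)).2
      (KL_outputDist_prodChannel_le_max hp₁ hp₁pos hW₁ hp₂ hp₂pos hW₂ hr)
  · exact sStar_le_sStar_prodChannel_left hp₁ hp₁pos hW₁ hp₂ hp₂pos hW₂
  · exact sStar_le_sStar_prodChannel_right hp₁ hp₁pos hW₁ hp₂ hp₂pos hW₂
end

section
/- There exists a Markov chain U - X - Y of finite-valued random variables such that I(U;Y) > ρ_m(X;Y)² · I(U;X). Specifically, let X ∼ Bernoulli(1/2) on {0,1}, let Y ∈ {0,E,1} be obtained from X via the channel with P(Y=0|X=0)=2/3, P(Y=E|X=0)=1/3, P(Y=E|X=1)=1/2, P(Y=1|X=1)=1/2, and let U ∈ {0,1} satisfy U - X - Y with P(U=1|X=0)=0.1, P(U=1|X=1)=0.4; then ρ_m(X;Y)² = 0.6 and I(U;Y)/I(U;X) > 0.6. -/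
open scoped BigOperators

/-- `X ∼ Bernoulli(1/2)`. -/
noncomputable def pX : Fin 2 → ℝ := fun _ => 1/2

/-- The asymmetric erasure channel: `Y ∈ {0, E, 1}` encoded as `Fin 3` with `E = 1`. -/
noncomputable def Wch : Fin 2 → Fin 3 → ℝ := ![![2/3, 1/3, 0], ![0, 1/2, 1/2]]

/-- Joint pmf of `(X,Y)`. -/
noncomputable def pXY : Fin 2 → Fin 3 → ℝ := fun x y => pX x * Wch x y

/-- `P(U = u | X = x)` (row `x`): `U|X=0 ∼ Ber(0.1)`, `U|X=1 ∼ Ber(0.4)`. -/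
noncomputable def condU : Fin 2 → Fin 2 → ℝ := ![![9/10, 1/10], ![3/5, 2/5]]

/-- Joint pmf of `(U,X)` (so that `U - X - Y` is a Markov chain). -/
noncomputable def qUX : Fin 2 → Fin 2 → ℝ := fun u x => pX x * condU x u

/-- Joint pmf of `(U,Y)` induced through the channel. -/
noncomputable def qUY : Fin 2 → Fin 3 → ℝ := fun u y => ∑ x, qUX u x * Wch x y

/-! For the uniform binary `X`, a centred unit-variance `f(X)` is `±(1, -1)`, and
Cauchy–Schwarz against `E[f(X) | Y] = ±(1, -1/5, -1)` shows `ρ_m(X;Y)² = E[E[f(X) | Y]²] = 3/5`.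
Both mutual informations are averages of information densities, which here are the rationals
`6/5, 4/5, 2/5, 8/5, 24/25, 28/25`; so `300 (I(U;Y) - 3/5 I(U;X))` is the logarithm of an
explicit rational, which exceeds `1`. -/

open Finset Real

theorem mutInfo_eq_sum_mul_log {X Y : Type*} [Fintype X] [Fintype Y] {p : X → Y → ℝ}
    (hp : ∀ x y, 0 ≤ p x y) :
    mutInfo p = ∑ x, ∑ y, p x y * log (p x y / ((∑ y', p x y') * ∑ x', p x' y)) := by
  have density (x : X) (y : Y) : p x y * log (p x y / ((∑ y', p x y') * ∑ x', p x' y)) =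
      p x y * log (p x y) - p x y * log (∑ y', p x y') - p x y * log (∑ x', p x' y) := by
    rcases (hp x y).eq_or_lt with h | h
    · simp [← h]
    have hX : 0 < ∑ y', p x y' := h.trans_le (single_le_sum (fun y' _ => hp x y') (mem_univ y))
    have hY : 0 < ∑ x', p x' y := h.trans_le (single_le_sum (fun x' _ => hp x' y) (mem_univ x))
    rw [log_div h.ne' (by positivity), log_mul hX.ne' hY.ne']
    ring
  simp only [density, sum_sub_distrib]
  simp only [mutInfo, entropy, negMulLog, Fintype.sum_prod_type, neg_mul, sum_neg_distrib, sum_mul]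
  rw [sum_comm (f := fun x y => p x y * log (∑ x', p x' y))]
  ring

theorem sq_correlation_le_mul_sum_sq_div {X Y : Type*} [Fintype X] [Fintype Y] {p : X → Y → ℝ}
    (hp : ∀ x y, 0 ≤ p x y) (f : X → ℝ) (g : Y → ℝ) :
    (∑ x, ∑ y, p x y * f x * g y) ^ 2 ≤
      (∑ x, ∑ y, p x y * g y ^ 2) * ∑ y, (∑ x, p x y * f x) ^ 2 / ∑ x, p x y := by
  have hpY (y : Y) : 0 ≤ ∑ x, p x y := sum_nonneg fun x _ => hp x y
  rw [sum_comm, sum_comm (f := fun x y => p x y * g y ^ 2)]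
  simp only [← sum_mul]
  refine sum_sq_le_sum_mul_sum_of_sq_le_mul _ (fun y _ => mul_nonneg (hpY y) (sq_nonneg _))
    (fun y _ => div_nonneg (sq_nonneg _) (hpY y)) fun y _ => ?_
  rcases (hpY y).eq_or_lt with h | h
  · have hzero : ∀ x, p x y = 0 := fun x =>
      (sum_eq_zero_iff_of_nonneg fun x _ => hp x y).1 h.symm x (mem_univ x)
    simp [hzero]
  · rw [mul_right_comm, mul_div_cancel₀ _ h.ne', mul_pow, mul_comm]

theorem Wch_nonneg (x : Fin 2) (y : Fin 3) : 0 ≤ Wch x y := by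
  fin_cases x <;> fin_cases y <;> norm_num [Wch]

theorem pXY_nonneg (x : Fin 2) (y : Fin 3) : 0 ≤ pXY x y :=
  mul_nonneg (by norm_num [pX]) (Wch_nonneg x y)

theorem sum_pXY_mul (φ : Fin 2 → Fin 3 → ℝ) :
    ∑ x, ∑ y, pXY x y * φ x y = φ 0 0 / 3 + φ 0 1 / 6 + φ 1 1 / 4 + φ 1 2 / 4 := by
  norm_num [Fin.sum_univ_succ, pXY, pX, Wch]
  ring

theorem sq_correlation_pXY_le {f : Fin 2 → ℝ} (hf_mean : ∑ x, ∑ y, pXY x y * f x = 0)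
    (hf_var : ∑ x, ∑ y, pXY x y * f x ^ 2 = 1) (g : Fin 3 → ℝ)
    (hg_var : ∑ x, ∑ y, pXY x y * g y ^ 2 = 1) :
    (∑ x, ∑ y, pXY x y * f x * g y) ^ 2 ≤ 3 / 5 := by
  rw [sum_pXY_mul (fun x _ => f x)] at hf_mean
  rw [sum_pXY_mul (fun x _ => f x ^ 2)] at hf_var
  have hf1 : f 1 = -f 0 := by linarith
  have hf0 : f 0 ^ 2 = 1 := by rw [hf1, neg_sq] at hf_var; linarith
  calc _ ≤ _ := sq_correlation_le_mul_sum_sq_div pXY_nonneg f g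
    _ = 3 / 5 := by
      rw [hg_var]
      norm_num [Fin.sum_univ_succ, pXY, pX, Wch, hf1]
      linear_combination 3 / 5 * hf0

theorem maxCorr_pXY : maxCorr pXY = √(3 / 5) := by
  refine IsGreatest.csSup_eq ⟨⟨![1, -1], fun y => ![1, -1/5, -1] y / √(3 / 5), ?_⟩, ?_⟩
  · have hs : √(3 / 5 : ℝ) ^ 2 = 3 / 5 := sq_sqrt (by norm_num)
    have hs_pos : 0 < √(3 / 5 : ℝ) := by positivity
    generalize √(3 / 5 : ℝ) = s at hs hs_pos ⊢
    refine ⟨?_, ?_, ?_, ?_, ?_⟩ <;> simp [pXY, pX, Wch, Fin.sum_univ_succ, div_pow, hs] <;>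
      field_simp <;> norm_num [hs]
  · rintro c ⟨f, g, hf_mean, -, hf_var, hg_var, rfl⟩
    exact (le_abs_self _).trans (abs_le_sqrt (sq_correlation_pXY_le hf_mean hf_var g hg_var))

theorem qUX_nonneg (u x : Fin 2) : 0 ≤ qUX u x := by
  fin_cases u <;> fin_cases x <;> norm_num [qUX, pX, condU]

theorem qUY_nonneg (u : Fin 2) (y : Fin 3) : 0 ≤ qUY u y :=
  sum_nonneg fun x _ => mul_nonneg (qUX_nonneg u x) (Wch_nonneg x y)

theorem mutInfo_qUX : mutInfo qUX =
    9/20 * log (6/5) + 3/10 * log (4/5) + 1/20 * log (2/5) + 1/5 * log (8/5) := by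
  rw [mutInfo_eq_sum_mul_log qUX_nonneg]
  norm_num [Fin.sum_univ_succ, qUX, pX, condU]
  ring

theorem mutInfo_qUY : mutInfo qUY =
    3/10 * log (6/5) + 3/10 * log (24/25) + 3/20 * log (4/5) + 1/30 * log (2/5)
      + 7/60 * log (28/25) + 1/10 * log (8/5) := by
  rw [mutInfo_eq_sum_mul_log qUY_nonneg]
  norm_num [Fin.sum_univ_succ, qUY, qUX, pX, condU, Wch]
  ring

theorem three_fifths_mul_mutInfo_qUX_lt : 3 / 5 * mutInfo qUX < mutInfo qUY := by
  -- `300 (I(U;Y) - 3/5 I(U;X))` is the logarithm of this rational number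
  have key : 0 < 9 * log (6/5) + 90 * log (24/25) - 9 * log (4/5) + log (2/5)
      + 35 * log (28/25) - 6 * log (8/5) := by
    have h := log_pos (show 1 < (6/5 : ℝ) ^ 9 * (24/25) ^ 90 / (4/5) ^ 9 * (2/5) * (28/25) ^ 35
      / (8/5) ^ 6 by norm_num)
    simpa [log_div, log_mul, log_pow] using h
  rw [mutInfo_qUX, mutInfo_qUY]
  linarith

/-- counterexample to the Erkip–Cover inequality: for this Markov chain
`U - X - Y` one has `ρ_m(X;Y)² = 0.6` yet `I(U;Y) > ρ_m(X;Y)² · I(U;X)`. -/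
theorem erkip_cover_counterexample :
    (maxCorr pXY)^2 = 3/5 ∧ mutInfo qUY > (maxCorr pXY)^2 * mutInfo qUX := by
  have hρ : maxCorr pXY ^ 2 = 3 / 5 := by rw [maxCorr_pXY, sq_sqrt (by norm_num)]
  exact ⟨hρ, hρ ▸ three_fifths_mul_mutInfo_qUX_lt⟩
end
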